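/- arXiv:2506.10250 — 11 statements merged into one kernel-verified Lean document; each statement's English description precedes it below -/
import Mathlib

section
/- For every family A : ZMod N → Matrix (Fin d) (Fin d) ℂ, the trace of the cyclic time-translation operator times the slice-wise Kronecker product equals the ordinary trace of the time-ordered matrix product: Tr(𝒮 * (⊗_t A t)) = tr(A (N−1) * A (N−2) * ⋯ * A 1 * A 0), where on the right-hand side the factors A k (with k ∈ {0,…,N−1} viewed in ZMod N) are multiplied in strictly decreasing order of the slice index k. -/
/-!
Both sides are sums over closed paths of length `N` in `Fin d`. Since `𝒮` maps the basis vector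
`g` to `g (· - 1)`, `Tr(𝒮 * M) = ∑ f, M (f (· + 1)) f`, so the left side is
`∑ f, ∏ t, A t (f (t + 1)) (f t)`. Expanding the matrix product along a path
`v 0, v 1, …, v (N - 1), v 0` gives the same sum on the right, once `ZMod N` is identified
with `Fin N`.
-/

open Matrix Complex

/-- The slice-wise Kronecker product `⊗_t A t` on the `N`-fold tensor power of `ℂ^d`,
realized via matrices indexed by functions `ZMod N → Fin d`. -/
noncomputable def sliceProd (N d : ℕ) [NeZero N]
    (A : ZMod N → Matrix (Fin d) (Fin d) ℂ) :
    Matrix (ZMod N → Fin d) (ZMod N → Fin d) ℂ :=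
  Matrix.of fun f g => ∏ t : ZMod N, A t (f t) (g t)

/-- The cyclic time-translation operator `𝒮` (representing `e^{iεP}`): the permutation
matrix with entries `𝒮 f g = 1` if `f t = g (t − 1)` for all `t`, and `0` otherwise. -/
noncomputable def timeShift (N d : ℕ) [NeZero N] :
    Matrix (ZMod N → Fin d) (ZMod N → Fin d) ℂ :=
  Matrix.of fun f g => if ∀ t : ZMod N, f t = g (t - 1) then 1 else 0

section PathSum

variable {R ι : Type*} [CommSemiring R] [Fintype ι] [DecidableEq ι]

theorem list_prod_range_succ_reverse_map (B : ℕ → Matrix ι ι R) (n : ℕ) :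
    ((List.range (n + 1)).reverse.map B).prod = B n * ((List.range n).reverse.map B).prod := by
  simp [List.range_succ]

/-- The extra factor `C` closes the open path; it is what makes the induction go through. -/
theorem trace_list_prod_range_reverse_map_mul (B : ℕ → Matrix ι ι R) (n : ℕ)
    (C : Matrix ι ι R) :
    trace (((List.range n).reverse.map B).prod * C) =
      ∑ v : Fin (n + 1) → ι,
        (∏ t : Fin n, B t (v t.succ) (v t.castSucc)) * C (v 0) (v (Fin.last n)) := by
  induction n generalizing C with
  | zero =>
    simp only [List.range_zero, List.reverse_nil, List.map_nil, List.prod_nil, one_mul,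
      Finset.univ_eq_empty, Finset.prod_empty]
    exact ((Equiv.funUnique (Fin 1) ι).sum_comp fun i => C i i).symm
  | succ n ih =>
    rw [list_prod_range_succ_reverse_map, trace_mul_cycle, trace_mul_comm, ih,
      ← (Fin.snocEquiv (n := n + 1) fun _ => ι).sum_comp, Fintype.sum_prod_type,
      Finset.sum_comm]
    refine Finset.sum_congr rfl fun v _ => ?_
    have snoc_zero (k : ι) : (Fin.snoc v k : Fin (n + 2) → ι) 0 = v 0 :=
      Fin.snoc_castSucc (α := fun _ => ι) k v 0
    simp only [Matrix.mul_apply, Finset.mul_sum, Fin.prod_univ_castSucc (n := n), Fin.snocEquiv,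
      Equiv.coe_fn_mk, Fin.snoc_castSucc, Fin.succ_castSucc, Fin.succ_last, Fin.snoc_last,
      snoc_zero, Fin.val_last, Fin.val_castSucc]
    exact Finset.sum_congr rfl fun k _ => by ring

theorem trace_list_prod_range_reverse_map (B : ℕ → Matrix ι ι R) (n : ℕ) :
    trace (((List.range (n + 1)).reverse.map B).prod) =
      ∑ v : Fin (n + 1) → ι, ∏ t : Fin (n + 1), B t (v (t + 1)) (v t) := by
  rw [list_prod_range_succ_reverse_map, ← trace_mul_comm, trace_list_prod_range_reverse_map_mul]
  refine Finset.sum_congr rfl fun v _ => ?_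
  rw [Fin.prod_univ_castSucc, Fin.last_add_one]
  simp only [Fin.coeSucc_eq_succ, Fin.val_castSucc, Fin.val_last]

end PathSum

theorem trace_timeShift_mul {N d : ℕ} [NeZero N]
    (M : Matrix (ZMod N → Fin d) (ZMod N → Fin d) ℂ) :
    trace (timeShift N d * M) = ∑ f : ZMod N → Fin d, M (fun t => f (t + 1)) f := by
  refine Finset.sum_congr rfl fun f _ => ?_
  rw [diag_apply, Matrix.mul_apply, Finset.sum_eq_single (fun t => f (t + 1))]
  · simp [timeShift]
  · intro g _ hg
    rw [timeShift, of_apply, if_neg, zero_mul]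
    exact fun h => hg (funext fun t => by simp [h (t + 1)])
  · simp

theorem trace_timeShift_sliceProd_general (N d : ℕ) [NeZero N]
    (A : ZMod N → Matrix (Fin d) (Fin d) ℂ) :
    Matrix.trace (timeShift N d * sliceProd N d A) =
      Matrix.trace (((List.range N).reverse.map
        (fun k => A (k : ZMod N))).prod) := by
  obtain ⟨m, rfl⟩ : ∃ m, N = m + 1 := Nat.exists_eq_succ_of_ne_zero (NeZero.ne N)
  -- the ascription `(k : ZMod N)` elaborates as a monadic coercion of the list `List.range N`
  simp only [bind_pure_comp, List.map_eq_map, List.map_map]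
  rw [trace_timeShift_mul, trace_list_prod_range_reverse_map]
  -- `ZMod (m + 1)` is `Fin (m + 1)` by definition, so the two sums range over the same paths
  refine Finset.sum_congr rfl fun f _ => ?_
  simp only [sliceProd, of_apply, Function.comp_apply]
  exact Finset.prod_congr rfl fun t _ => by congr 1; exact (ZMod.natCast_zmod_val t).symm

/-- `Tr(𝒮 * (⊗_t A t)) = tr(A (N−1) * A (N−2) * ⋯ * A 1 * A 0)`, the time-ordered
matrix product with factors in strictly decreasing order of the slice index. -/
theorem trace_timeShift_sliceProd (N d : ℕ) [NeZero N] (hd : 1 ≤ d)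
    (A : ZMod N → Matrix (Fin d) (Fin d) ℂ) :
    Matrix.trace (timeShift N d * sliceProd N d A) =
      Matrix.trace (((List.range N).reverse.map
        (fun k => A (k : ZMod N))).prod) :=
  trace_timeShift_sliceProd_general N d A
end

section
/- Let H : Matrix (Fin d) (Fin d) ℂ be an arbitrary complex matrix, ε ∈ ℝ, and T = N·ε. For every family A : ZMod N → Matrix (Fin d) (Fin d) ℂ, Tr(𝒮 * ⊗_t (Matrix.exp(−(i·ε) • H) * A t)) = tr( Matrix.exp(−(i·T) • H) * ∏_{k = N−1, N−2, …, 1, 0} ( Matrix.exp((i·ε·k) • H) * A k * Matrix.exp(−(i·ε·k) • H) ) ), where the product on the right runs over k in strictly decreasing order (time ordering). The left-hand side is Tr[e^{iS} ⊗_t A_t] for the quantum action operator e^{iS} := 𝒮 · ⊗_t e^{−iεH}, and the right-hand side is the time-ordered correlator of the Heisenberg operators A(εk) = e^{iεkH} A e^{−iεkH} weighted by e^{−iTH}; Hermiticity of H is not required. -/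
open Matrix Complex NormedSpace

/-!
Since `𝒮` sends the row index `f` to `t ↦ f (t + 1)`, the trace `Tr (𝒮 * ⊗_t B t)` is the sum over
closed paths `f : ZMod N → Fin d` of `∏_t B t (f (t + 1)) (f t)`, which is exactly the expansion of
`tr (B (N - 1) * ⋯ * B 0)` as a sum over closed paths. With `B t = e^{-iεH} A t`, the right-hand
side reduces to this product because `s ↦ e^{sH}` is a one-parameter group: in
`e^{-iεNH} ∏_k e^{iεkH} A k e^{-iεkH}` consecutive factors `e^{-iε(k+1)H} e^{iεkH}` collapse to
`e^{-iεH}`.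
-/

theorem Fin.snoc_zero_succ {α : Type*} {n : ℕ} (q : Fin (n + 1) → α) (t : Fin (n + 1)) :
    Fin.snoc (α := fun _ => α) q (q 0) t.succ = q (t + 1) := by
  induction t using Fin.lastCases with
  | last => rw [Fin.succ_last, Fin.snoc_last, Fin.last_add_one]
  | cast s => rw [Fin.succ_castSucc, Fin.snoc_castSucc, Fin.coeSucc_eq_succ]

theorem AddChar.map_neg_mul_prod_conj {R M : Type*} [Ring R] [Monoid M] (ψ : AddChar R M)
    (c : R) (A : ℕ → M) (n : ℕ) :
    ψ (-(c * n)) *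
        ((List.range n).reverse.map fun k : ℕ => ψ (c * k) * A k * ψ (-(c * k))).prod =
      ((List.range n).reverse.map fun k => ψ (-c) * A k).prod := by
  induction n with
  | zero => simp
  | succ n ih =>
    have hstep : ψ (-(c * (n + 1 : ℕ))) * ψ (c * n) = ψ (-c) := by
      rw [← AddChar.map_add_eq_mul]; congr 1; push_cast; noncomm_ring
    simp only [List.range_succ, List.reverse_append, List.reverse_singleton, List.singleton_append,
      List.map_cons, List.prod_cons]
    rw [← ih, ← hstep]
    simp only [mul_assoc]

namespace Matrix

variable {R ι : Type*} [CommSemiring R] [Fintype ι] [DecidableEq ι]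

theorem prod_reverse_ofFn_apply {n : ℕ} (M : Fin n → Matrix ι ι R) (i j : ι) :
    (List.ofFn M).reverse.prod i j =
      ∑ p : Fin (n + 1) → ι,
        if p (Fin.last n) = i ∧ p 0 = j then ∏ t, M t (p t.succ) (p t.castSucc) else 0 := by
  induction n generalizing i with
  | zero =>
    rw [← (Equiv.funUnique (Fin 1) ι).symm.sum_comp]
    simp [one_apply, ite_and, Finset.sum_ite_eq']
  | succ n ih =>
    have snoc_succ (p : Fin (n + 1) → ι) (x : ι) (t : Fin n) :
        Fin.snoc (α := fun _ => ι) p x t.castSucc.succ = p t.succ := by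
      rw [Fin.succ_castSucc, Fin.snoc_castSucc]
    rw [List.ofFn_succ', List.concat_eq_append, List.reverse_concat', List.prod_cons, mul_apply,
      ← (Fin.snocEquiv fun _ => ι).sum_comp, Fintype.sum_prod_type]
    simp only [ih, Fin.prod_univ_castSucc, snoc_succ, Fin.snocEquiv_apply, Fin.snoc_last,
      Finset.mul_sum, ite_and, mul_ite, mul_zero]
    rw [Finset.sum_comm]
    simp [mul_comm]

theorem trace_prod_reverse_ofFn {n : ℕ} [NeZero n] (M : Fin n → Matrix ι ι R) :
    trace (List.ofFn M).reverse.prod = ∑ p : Fin n → ι, ∏ t, M t (p (t + 1)) (p t) := by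
  obtain ⟨n, rfl⟩ := Nat.exists_eq_succ_of_ne_zero (NeZero.ne n)
  simp only [trace, diag, prod_reverse_ofFn_apply]
  rw [Finset.sum_comm, ← (Fin.snocEquiv fun _ => ι).sum_comp, Fintype.sum_prod_type,
    Finset.sum_comm]
  simp [ite_and, Fin.snoc_zero_succ]

-- `ZMod.finEquiv` is a ring isomorphism, so its type needs the ring structure on `Fin N`.
open Fin.CommRing in
theorem trace_prod_reverse_map_range {N : ℕ} [NeZero N] (B : ZMod N → Matrix ι ι R) :
    trace ((List.range N).reverse.map fun k : ℕ => B k).prod =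
      ∑ f : ZMod N → ι, ∏ t, B t (f (t + 1)) (f t) := by
  let e := ZMod.finEquiv N
  have map_range : (List.range N).map (fun k : ℕ => B k) = List.ofFn (B ∘ e) := by
    rw [List.ofFn_eq_map, ← List.map_coe_finRange_eq_range, List.map_map]
    refine List.map_congr_left fun s _ => ?_
    rw [Function.comp_apply, ← map_natCast e, Fin.cast_val_eq_self]
    rfl
  rw [List.map_reverse, map_range, trace_prod_reverse_ofFn,
    ← (e.toEquiv.arrowCongr (Equiv.refl ι)).symm.sum_comp]
  refine Fintype.sum_congr _ _ fun p => Fintype.prod_equiv e.toEquiv _ _ fun s => ?_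
  simp

noncomputable def expSMulAddChar {m : Type*} [Fintype m] [DecidableEq m]
    (H : Matrix m m ℂ) : AddChar ℂ (Matrix m m ℂ) where
  toFun s := exp (s • H)
  map_zero_eq_one' := by simp
  map_add_eq_mul' s t := by
    rw [add_smul, Matrix.exp_add_of_commute]
    exact ((Commute.refl H).smul_left s).smul_right t

end Matrix

theorem timeShift_mul_apply {N d : ℕ} [NeZero N] {α : Type*} [Fintype α]
    (M : Matrix (ZMod N → Fin d) α ℂ) (f : ZMod N → Fin d) (a : α) :
    (timeShift N d * M) f a = M (fun t => f (t + 1)) a := by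
  have shift_iff (g : ZMod N → Fin d) : (∀ t, f t = g (t - 1)) ↔ g = fun t => f (t + 1) := by
    refine ⟨fun h => funext fun t => ?_, fun h t => ?_⟩
    · simpa using (h (t + 1)).symm
    · simp [h]
  simp [timeShift, mul_apply, shift_iff]

theorem trace_timeShift_mul_sliceProd {N d : ℕ} [NeZero N]
    (B : ZMod N → Matrix (Fin d) (Fin d) ℂ) :
    trace (timeShift N d * sliceProd N d B) = ∑ f : ZMod N → Fin d, ∏ t, B t (f (t + 1)) (f t) := by
  simp [trace, timeShift_mul_apply, sliceProd]

theorem trace_quantumAction_sliceProd_general (N d : ℕ) [NeZero N]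
    (H : Matrix (Fin d) (Fin d) ℂ) (ε : ℝ)
    (A : ZMod N → Matrix (Fin d) (Fin d) ℂ) :
    Matrix.trace (timeShift N d *
        sliceProd N d (fun t => NormedSpace.exp ((-(Complex.I * (ε : ℂ))) • H) * A t)) =
      Matrix.trace (NormedSpace.exp ((-(Complex.I * ((N : ℂ) * (ε : ℂ)))) • H) *
        ((List.range N).reverse.map (fun (k : ℕ) =>
          NormedSpace.exp ((Complex.I * (ε : ℂ) * (k : ℂ)) • H) * A (k : ZMod N) *
            NormedSpace.exp ((-(Complex.I * (ε : ℂ) * (k : ℂ))) • H))).prod) := by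
  rw [trace_timeShift_mul_sliceProd, ← trace_prod_reverse_map_range,
    show Complex.I * ((N : ℂ) * ε) = Complex.I * ε * N by ring]
  exact congrArg trace
    ((expSMulAddChar H).map_neg_mul_prod_conj (Complex.I * ε) (fun k => A k) N).symm

/-- `Tr[e^{iS} ⊗_t A_t] = tr[e^{-iTH} T̂ ∏_k A(εk)]`: the spacetime trace against the
quantum action operator `e^{iS} = 𝒮 ⊗_t e^{-iεH}` equals the ordinary trace of
`e^{-iTH}` times the time-ordered product of the Heisenberg operators
`A(εk) = e^{iεkH} A e^{-iεkH}`, with `T = Nε`.  `H` need not be Hermitian. -/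
theorem trace_quantumAction_sliceProd (N d : ℕ) [NeZero N] (hd : 1 ≤ d)
    (H : Matrix (Fin d) (Fin d) ℂ) (ε : ℝ)
    (A : ZMod N → Matrix (Fin d) (Fin d) ℂ) :
    Matrix.trace (timeShift N d *
        sliceProd N d (fun t => NormedSpace.exp ((-(Complex.I * (ε : ℂ))) • H) * A t)) =
      Matrix.trace (NormedSpace.exp ((-(Complex.I * ((N : ℂ) * (ε : ℂ)))) • H) *
        ((List.range N).reverse.map (fun (k : ℕ) =>
          NormedSpace.exp ((Complex.I * (ε : ℂ) * (k : ℂ)) • H) * A (k : ZMod N) *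
            NormedSpace.exp ((-(Complex.I * (ε : ℂ) * (k : ℂ))) • H))).prod) :=
  trace_quantumAction_sliceProd_general N d H ε A
end

section
/- For every integer N ≥ 1 and all t₁, t₂ ∈ {0, …, N−1}: Σ_{n=0}^{N−1} Complex.exp(−Complex.I · π · (2·n+1) · (t₁ − t₂) / N) / (1 − Complex.exp(Complex.I · π · (2·n+1) / N)) equals N/2 if t₂ ≤ t₁ and equals −N/2 if t₁ < t₂. (This identifies the discrete Fourier expansion, over the half-integer frequencies ω_n = (2n+1)π/N, of the step function θ_t = 1/2 for t ≥ 0 and θ_t = −1/2 for t < 0; it is the key computation giving the time-ordered two-point contraction Tr[P e^{iεP} a_{t₁ i} a†_{t₂ j}] = (δ_{ij}/2)·sgn(t₁ − t₂)·Tr[P e^{iεP}] with the convention sgn(0) = +1.) -/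
/-!
Put `ζ = exp (π i / N)`, a primitive `2N`-th root of unity, `z_n = ζ ^ (2n+1)` and
`t = t₁ - t₂`. Since `z_n ^ N = -1`, `1 / (1 - z_n) = (∑_{k<N} z_n ^ k) / 2`, so the sum equals
`(1/2) ∑_{k<N} ∑_{n<N} z_n ^ (k - t)`. The inner sum over the odd powers of `ζ` vanishes unless
`N ∣ k - t`, where it is `ζ ^ (k - t) * N`. As `-N < k - t < 2N`, the only surviving term is
`k - t = 0` when `t ≥ 0` and `k - t = N` (with `ζ ^ N = -1`) when `t < 0`.
-/

open Finset

section

variable {K : Type*} [Field K]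

theorem inv_one_sub_eq_geom_sum_div_two {z : K} {N : ℕ} (h2 : (2 : K) ≠ 0) (hz : z ^ N = -1) :
    (1 - z)⁻¹ = (∑ k ∈ range N, z ^ k) / 2 := by
  have hprod : (1 - z) * ∑ k ∈ range N, z ^ k = 2 := by
    rw [mul_neg_geom_sum, hz]; ring
  exact inv_eq_of_mul_eq_one_right (by rw [mul_div_assoc', hprod, div_self h2])

namespace IsPrimitiveRoot

variable {ζ : K} {N : ℕ}

theorem pow_eq_neg_one_of_two_mul (hζ : IsPrimitiveRoot ζ (2 * N)) (hN : 0 < N) :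
    ζ ^ N = -1 :=
  (hζ.pow (by positivity) (mul_comm 2 N)).eq_neg_one_of_two_right

theorem sum_range_pow_two_mul_add_one_zpow (hζ : IsPrimitiveRoot ζ (2 * N)) (m : ℤ) :
    ∑ n ∈ range N, (ζ ^ (2 * n + 1)) ^ m = if (N : ℤ) ∣ m then ζ ^ m * N else 0 := by
  rcases N.eq_zero_or_pos with rfl | hN
  · simp
  have hζ0 : ζ ≠ 0 := hζ.ne_zero (by positivity)
  have hterm : ∀ n : ℕ, (ζ ^ (2 * n + 1)) ^ m = ζ ^ m * (ζ ^ (2 * m)) ^ n := by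
    intro n
    rw [← zpow_natCast, ← zpow_mul, ← zpow_natCast, ← zpow_mul, ← zpow_add₀ hζ0]
    push_cast; ring_nf
  have hroot : ζ ^ (2 * m) = 1 ↔ (N : ℤ) ∣ m := by
    rw [hζ.zpow_eq_one_iff_dvd]; push_cast
    exact mul_dvd_mul_iff_left two_ne_zero
  simp_rw [hterm, ← mul_sum]
  split_ifs with hdvd
  · simp [hroot.mpr hdvd]
  · have hne : ζ ^ (2 * m) - 1 ≠ 0 := sub_ne_zero.mpr (mt hroot.mp hdvd)
    have hpowN : (ζ ^ (2 * m)) ^ N = 1 := by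
      rw [← zpow_natCast, ← zpow_mul, hζ.zpow_eq_one_iff_dvd]
      exact ⟨m, by push_cast; ring⟩
    rw [geom_sum_eq (sub_ne_zero.mp hne), hpowN]; simp

theorem sum_zpow_neg_sub_div_one_sub_pow_two_mul_add_one (hζ : IsPrimitiveRoot ζ (2 * N))
    {t₁ t₂ : ℕ} (h₁ : t₁ < N) (h₂ : t₂ < N) :
    ∑ n ∈ range N, (ζ ^ (2 * n + 1)) ^ (-((t₁ : ℤ) - t₂)) / (1 - ζ ^ (2 * n + 1)) =
      if t₂ ≤ t₁ then (N : K) / 2 else -((N : K) / 2) := by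
  have hN : 0 < N := by omega
  have hneg : ζ ^ N = -1 := hζ.pow_eq_neg_one_of_two_mul hN
  have h2 : (2 : K) ≠ 0 := fun h ↦
    hζ.pow_ne_one_of_pos_of_lt hN.ne' (by omega) (by rw [hneg]; linear_combination -h)
  set t : ℤ := t₁ - t₂
  have hterm : ∀ n : ℕ, (ζ ^ (2 * n + 1)) ^ (-t) / (1 - ζ ^ (2 * n + 1)) =
      (∑ k ∈ range N, (ζ ^ (2 * n + 1)) ^ ((k : ℤ) - t)) / 2 := by
    intro n
    have hz : (ζ ^ (2 * n + 1)) ^ N = -1 := by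
      rw [← pow_mul, mul_comm, pow_mul, hneg, Odd.neg_one_pow ⟨n, rfl⟩]
    have hz0 : ζ ^ (2 * n + 1) ≠ 0 := pow_ne_zero _ (hζ.ne_zero (by omega))
    rw [div_eq_mul_inv, inv_one_sub_eq_geom_sum_div_two h2 hz, mul_div_assoc', mul_sum]
    congr 1
    refine sum_congr rfl fun k _ ↦ ?_
    rw [← zpow_natCast (ζ ^ (2 * n + 1)) k, ← zpow_add₀ hz0, neg_add_eq_sub]
  simp_rw [hterm, ← sum_div]
  rw [sum_comm]
  simp_rw [hζ.sum_range_pow_two_mul_add_one_zpow]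
  split_ifs with hle
  · rw [sum_eq_single_of_mem (t₁ - t₂) (mem_range.mpr (by omega))]
    · simp [t, Nat.cast_sub hle]
    · intro k hk hne
      rw [if_neg]
      intro hdvd
      have := Int.eq_zero_of_abs_lt_dvd hdvd (abs_lt.mpr ⟨by omega, by simp at hk; omega⟩)
      omega
  · rw [sum_eq_single_of_mem (N + t₁ - t₂) (mem_range.mpr (by omega))]
    · have hk : ((N + t₁ - t₂ : ℕ) : ℤ) - t = N := by omega
      simp [hk, hneg, neg_div]
    · intro k hk hne
      rw [if_neg]
      intro hdvd
      have := Int.eq_zero_of_abs_lt_dvd (dvd_sub_self_right.mpr hdvd)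
        (abs_lt.mpr ⟨by omega, by simp at hk; omega⟩)
      omega

end IsPrimitiveRoot

end

open Complex Real

/-- Discrete Fourier expansion, over the half-integer frequencies
`ω_n = (2n+1)π/N`, of the step function `θ_t = 1/2 (t ≥ 0)`, `θ_t = −1/2 (t < 0)`:
for `t₁, t₂ ∈ {0,…,N−1}`,
`Σ_{n<N} e^{−iπ(2n+1)(t₁−t₂)/N} / (1 − e^{iπ(2n+1)/N})` equals `N/2` if `t₂ ≤ t₁`
and `−N/2` if `t₁ < t₂`.  This is the key computation giving the time-ordered
two-point contraction `Tr[P e^{iεP} a_{t₁ i} a†_{t₂ j}]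
  = (δ_{ij}/2)·sgn(t₁ − t₂)·Tr[P e^{iεP}]` with `sgn(0) = +1`. -/
theorem sum_exp_step_function (N : ℕ) (hN : 1 ≤ N) (t₁ t₂ : ℕ)
    (h₁ : t₁ ≤ N - 1) (h₂ : t₂ ≤ N - 1) :
    ∑ n ∈ Finset.range N,
        Complex.exp (-Complex.I * (Real.pi : ℂ) * (2 * (n : ℂ) + 1) *
            (((t₁ : ℤ) - (t₂ : ℤ) : ℤ) : ℂ) / (N : ℂ)) /
          (1 - Complex.exp (Complex.I * (Real.pi : ℂ) * (2 * (n : ℂ) + 1) / (N : ℂ))) =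
      if t₂ ≤ t₁ then (N : ℂ) / 2 else -((N : ℂ) / 2) := by
  set ζ := exp (2 * π * I / ↑(2 * N))
  have hden : ∀ n : ℕ, exp (I * π * (2 * n + 1) / N) = ζ ^ (2 * n + 1) := fun n ↦ by
    rw [← Complex.exp_nat_mul]; congr 1; push_cast; field_simp
  have hnum : ∀ n : ℕ, exp (-I * π * (2 * n + 1) * ((t₁ : ℤ) - t₂ : ℤ) / N) =
      (ζ ^ (2 * n + 1)) ^ (-((t₁ : ℤ) - t₂)) := fun n ↦ by
    rw [← Complex.exp_nat_mul, ← Complex.exp_int_mul]; congr 1; push_cast; field_simp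
  simp_rw [hden, hnum]
  exact (isPrimitiveRoot_exp (2 * N) (by omega)).sum_zpow_neg_sub_div_one_sub_pow_two_mul_add_one
    (by omega) (by omega)
end

section
/- Let G be a group, N ≥ 1 an integer, w ∈ G, and u : ZMod N → ℕ → G a family (u t m represents the evolution operator U(εm) acting on time slice t) such that: (i) u t 0 = 1 for every t; (ii) values on distinct slices commute: u t m * u t' m' = u t' m' * u t m whenever t ≠ t'; (iii) conjugation by w shifts the slice index cyclically: w * (u t m) * w⁻¹ = u (t+1) m for all t ∈ ZMod N and m ∈ ℕ. Then w * ∏_{k=0}^{N−1} ( u k (k+1) * (u k k)⁻¹ ) = (u 0 N) * (∏_{k=0}^{N−1} u k k) * w * (∏_{k=0}^{N−1} u k k)⁻¹, where in each factor the first argument k is viewed in ZMod N and the second as a natural number, and the products over k are unambiguous by hypothesis (ii). (This is the group-theoretic content of the paper's Theorem e^{iS} = U₀(T) 𝒱† e^{iεP} 𝒱 relating the quantum action operator e^{iS} = e^{iεP} ∏_t U_t[ε(t+1), εt] to the time-translation operator, with w = e^{iεP}, u t m = U_t(εm), and 𝒱⁻¹ = ∏_t U_t(εt).) -/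
private lemma commute_prod_split' {G : Type*} [Group G] (p q : ℕ → G) :
    ∀ n : ℕ, (∀ i j, i < n → j < n → i ≠ j → Commute (p i) (q j)) →
      ((List.range n).map (fun k : ℕ => p k * q k)).prod =
        ((List.range n).map p).prod * ((List.range n).map q).prod := by
  intro n
  induction n with
  | zero => simp
  | succ n ih =>
    intro h
    have hcq : Commute (((List.range n).map q).prod) (p n) := by
      apply (Commute.list_prod_right _ _ ?_).symm
      intro x hx
      simp only [List.mem_map, List.mem_range] at hx
      obtain ⟨j, hj, rfl⟩ := hx
      exact h n j (by omega) (by omega) (by omega)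
    rw [List.range_succ]
    simp only [List.map_append, List.prod_append, List.map_cons, List.map_nil,
      List.prod_cons, List.prod_nil, mul_one]
    rw [ih (fun i j hi hj hij => h i j (by omega) (by omega) hij)]
    rw [hcq.mul_mul_mul_comm]

private lemma prod_inv_of_commute' {G : Type*} [Group G] (g : ℕ → G) :
    ∀ n : ℕ, (∀ i j, i < n → j < n → i ≠ j → Commute (g i) (g j)) →
      ((List.range n).map (fun k : ℕ => (g k)⁻¹)).prod =
        (((List.range n).map g).prod)⁻¹ := by
  intro n
  induction n with
  | zero => simp
  | succ n ih =>
    intro h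
    have hc : Commute (((List.range n).map g).prod) (g n) := by
      apply (Commute.list_prod_right _ _ ?_).symm
      intro x hx
      simp only [List.mem_map, List.mem_range] at hx
      obtain ⟨j, hj, rfl⟩ := hx
      exact h n j (by omega) (by omega) (by omega)
    rw [List.range_succ]
    simp only [List.map_append, List.prod_append, List.map_cons, List.map_nil,
      List.prod_cons, List.prod_nil, mul_one]
    rw [ih (fun i j hi hj hij => h i j (by omega) (by omega) hij)]
    rw [mul_inv_rev, hc.inv_inv.eq]

private lemma telescope' {G : Type*} [Group G] (N : ℕ) (u : ZMod N → ℕ → G)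
    (h0 : u 0 0 = 1) :
    ∀ n : ℕ, ((List.range n).map (fun k : ℕ => u ((k + 1 : ℕ) : ZMod N) (k + 1))).prod =
      ((List.range n).map (fun k : ℕ => u ((k : ℕ) : ZMod N) k)).prod * u ((n : ℕ) : ZMod N) n := by
  intro n
  induction n with
  | zero => simpa using h0.symm
  | succ n ih =>
    rw [List.range_succ]
    simp only [List.map_append, List.prod_append, List.map_cons, List.map_nil,
      List.prod_cons, List.prod_nil, mul_one]
    rw [ih]

/-- The group-theoretic content of the identity `e^{iS} = U₀(T) 𝒱† e^{iεP} 𝒱`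
relating the quantum action operator `e^{iS} = e^{iεP} ∏_t U_t[ε(t+1), εt]` to the
time-translation operator, with `w = e^{iεP}`, `u t m = U_t(εm)` and
`𝒱⁻¹ = ∏_t U_t(εt)`: if `u t 0 = 1`, values on distinct slices commute, and
conjugation by `w` shifts the slice index cyclically, then
`w ∏_k (u k (k+1) (u k k)⁻¹) = u 0 N · (∏_k u k k) · w · (∏_k u k k)⁻¹`. -/
theorem quantum_action_eq_conj_timeShift {G : Type*} [Group G] (N : ℕ) [NeZero N]
    (w : G) (u : ZMod N → ℕ → G)
    (h0 : ∀ t, u t 0 = 1)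
    (hcomm : ∀ t t' m m', t ≠ t' → u t m * u t' m' = u t' m' * u t m)
    (hshift : ∀ (t : ZMod N) (m : ℕ), w * u t m * w⁻¹ = u (t + 1) m) :
    w * ((List.range N).map (fun k : ℕ =>
        u (k : ZMod N) (k + 1) * (u (k : ZMod N) k)⁻¹)).prod =
      u 0 N * ((List.range N).map (fun k : ℕ => u (k : ZMod N) k)).prod * w *
        (((List.range N).map (fun k : ℕ => u (k : ZMod N) k)).prod)⁻¹ := by
  have hinj : ∀ i j : ℕ, i < N → j < N → i ≠ j → (i : ZMod N) ≠ (j : ZMod N) := by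
    intro i j hi hj hij hcast
    apply hij
    have := congrArg ZMod.val hcast
    rwa [ZMod.val_natCast_of_lt hi, ZMod.val_natCast_of_lt hj] at this
  have hcomm' : ∀ i j : ℕ, ∀ m m' : ℕ, i < N → j < N → i ≠ j →
      Commute (u (i : ZMod N) m) (u (j : ZMod N) m') := by
    intro i j m m' hi hj hij
    exact hcomm _ _ m m' (hinj i j hi hj hij)
  set T : G := ((List.range N).map (fun k : ℕ => u (k : ZMod N) k)).prod with hT
  set F : G := ((List.range N).map (fun k : ℕ => u (k : ZMod N) (k + 1))).prod with hF
  -- Step 1: split the product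
  have hsplit : ((List.range N).map (fun k : ℕ =>
      u (k : ZMod N) (k + 1) * (u (k : ZMod N) k)⁻¹)).prod = F * T⁻¹ := by
    rw [commute_prod_split' (fun k => u (k : ZMod N) (k + 1))
      (fun k => (u (k : ZMod N) k)⁻¹) N
      (fun i j hi hj hij => (hcomm' i j _ _ hi hj hij).inv_right)]
    rw [prod_inv_of_commute' (fun k => u (k : ZMod N) k) N
      (fun i j hi hj hij => hcomm' i j _ _ hi hj hij)]
  -- Step 2: conjugation by `w` shifts indices
  have hconj : w * F * w⁻¹ =
      ((List.range N).map (fun k : ℕ => u ((k + 1 : ℕ) : ZMod N) (k + 1))).prod := by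
    have key : (MulAut.conj w) F =
        ((List.range N).map (fun k : ℕ => u ((k + 1 : ℕ) : ZMod N) (k + 1))).prod := by
      rw [hF, ← MulEquiv.coe_toMonoidHom, map_list_prod, List.map_map]
      congr 1
      apply List.map_congr_left
      intro k _
      simp only [Function.comp_apply, MulEquiv.coe_toMonoidHom, MulAut.conj_apply]
      rw [hshift]
      congr 1
      push_cast
      ring
    rw [← key, MulAut.conj_apply]
  -- Step 3: telescoping
  have htel : ((List.range N).map (fun k : ℕ =>
      u ((k + 1 : ℕ) : ZMod N) (k + 1))).prod = u 0 N * T := by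
    rw [telescope' N u (by simpa using h0 ((0 : ℕ) : ZMod N)) N]
    rw [show ((N : ℕ) : ZMod N) = 0 from ZMod.natCast_self N]
    have hc : Commute (u 0 N) T := by
      apply Commute.list_prod_right
      intro x hx
      simp only [List.mem_map, List.mem_range] at hx
      obtain ⟨j, hj, rfl⟩ := hx
      rcases Nat.eq_zero_or_pos j with rfl | hjpos
      · simp only [Nat.cast_zero, h0]
        exact Commute.one_right _
      · refine (hcomm _ _ _ _ ?_).symm
        intro h
        exact hinj j 0 hj (Nat.pos_of_ne_zero (NeZero.ne N)) (by omega)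
          (by simpa using h)
    exact hc.symm.eq
  have hkey : w * F = u 0 N * T * w := by
    have h1 : w * F * w⁻¹ = u 0 N * T := by rw [hconj, htel]
    calc w * F = (w * F * w⁻¹) * w := by group
    _ = u 0 N * T * w := by rw [h1]
  rw [hsplit, ← mul_assoc, hkey]
end

section
/- Let H : Matrix (Fin d) (Fin d) ℂ be Hermitian, ε ∈ ℝ, and ρ : Matrix (Fin d) (Fin d) ℂ with tr ρ ≠ 0. Set D := d^N and index vectors on the doubled space by pairs (f, h) of functions ZMod N → Fin d. Define Φ⁺ to be the (unnormalized) maximally entangled vector with entries Φ⁺ (f, h) = 1 if f = h and 0 otherwise, Ψ the vector with entries Ψ (f, h) = G f h (the Choi vector of G), and the generalized spacetime state R := (⟨Φ⁺, Ψ⟩)⁻¹ • vecMulVec Ψ (star Φ⁺) (i.e. R = |Ψ⟩⟨Φ⁺| / ⟨Φ⁺|Ψ⟩). Then: (i) ⟨Φ⁺, Ψ⟩ = Tr G = tr ρ (in particular it is nonzero); (ii) R * R = R; (iii) trace R = 1; (iv) the partial trace of R over the second (environment) factor, defined by (Tr_E R) f g := Σ_h R (f,h) (g,h), equals (tr ρ)⁻¹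 • G. -/
/-!
Everything rests on `⟨Φ⁺, Ψ⟩ = Tr G = tr ρ ≠ 0`: then `R = |Ψ⟩⟨Φ⁺| / ⟨Φ⁺, Ψ⟩` is a rank-one
idempotent of trace one, and contracting `⟨Φ⁺|` against the environment index returns `G`.
By cyclicity, `Tr G = Tr (𝒱 ρ₀ 𝒱ᴴ 𝒮)`, and `𝒱 ρ₀ 𝒱ᴴ = ρ₀` because `𝒱` is the identity on
slice `0` and unitary on every other slice. The diagonal entry `(ρ₀ 𝒮) f f` forces
`f t = f (t - 1)` for all `t ≠ 0`, i.e. `f` is constant with some value `c`, and then equals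
`ρ c c`; summing over `c` gives `tr ρ`.
-/

open Matrix Complex NormedSpace

/-- The slice-local operator `B_t`. -/
noncomputable def sliceLocal (N d : ℕ) [NeZero N]
    (B : Matrix (Fin d) (Fin d) ℂ) (t : ZMod N) :
    Matrix (ZMod N → Fin d) (ZMod N → Fin d) ℂ :=
  sliceProd N d (fun t' => if t' = t then B else 1)

/-- `𝒱 := ⊗_t e^{iεtH}`. -/
noncomputable def Vop (N d : ℕ) [NeZero N] (H : Matrix (Fin d) (Fin d) ℂ) (ε : ℝ) :
    Matrix (ZMod N → Fin d) (ZMod N → Fin d) ℂ :=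
  sliceProd N d (fun t => NormedSpace.exp ((Complex.I * (ε : ℂ) * (t.val : ℂ)) • H))

/-- `G := ρ₀ e^{iS̃}` with `e^{iS̃} = 𝒱ᴴ 𝒮 𝒱`. -/
noncomputable def Gst (N d : ℕ) [NeZero N] (H : Matrix (Fin d) (Fin d) ℂ) (ε : ℝ)
    (ρ : Matrix (Fin d) (Fin d) ℂ) :
    Matrix (ZMod N → Fin d) (ZMod N → Fin d) ℂ :=
  sliceLocal N d ρ 0 * ((Vop N d H ε)ᴴ * timeShift N d * Vop N d H ε)

/-- The unnormalized maximally entangled vector `Φ⁺` on the doubled index set. -/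
noncomputable def PhiPlus (N d : ℕ) [NeZero N] :
    ((ZMod N → Fin d) × (ZMod N → Fin d)) → ℂ :=
  fun p => if p.1 = p.2 then 1 else 0

/-- The Choi vector `Ψ` of `G`. -/
noncomputable def PsiVec (N d : ℕ) [NeZero N] (H : Matrix (Fin d) (Fin d) ℂ) (ε : ℝ)
    (ρ : Matrix (Fin d) (Fin d) ℂ) :
    ((ZMod N → Fin d) × (ZMod N → Fin d)) → ℂ :=
  fun p => Gst N d H ε ρ p.1 p.2

/-- The generalized spacetime state `R = |Ψ⟩⟨Φ⁺| / ⟨Φ⁺|Ψ⟩`. -/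
noncomputable def Rst (N d : ℕ) [NeZero N] (H : Matrix (Fin d) (Fin d) ℂ) (ε : ℝ)
    (ρ : Matrix (Fin d) (Fin d) ℂ) :
    Matrix ((ZMod N → Fin d) × (ZMod N → Fin d))
      ((ZMod N → Fin d) × (ZMod N → Fin d)) ℂ :=
  (dotProduct (star (PhiPlus N d)) (PsiVec N d H ε ρ))⁻¹ •
    Matrix.vecMulVec (PsiVec N d H ε ρ) (star (PhiPlus N d))

lemma sliceProd_mul_sliceProd (N d : ℕ) [NeZero N] (A B : ZMod N → Matrix (Fin d) (Fin d) ℂ) :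
    sliceProd N d A * sliceProd N d B = sliceProd N d (fun t => A t * B t) := by
  ext f g
  simp only [sliceProd, mul_apply, of_apply, Fintype.prod_sum, Finset.prod_mul_distrib]

lemma conjTranspose_sliceProd (N d : ℕ) [NeZero N] (A : ZMod N → Matrix (Fin d) (Fin d) ℂ) :
    (sliceProd N d A)ᴴ = sliceProd N d (fun t => (A t)ᴴ) := by
  ext f g
  simp [sliceProd, conjTranspose_apply, star_prod]

lemma sliceLocal_apply (N d : ℕ) [NeZero N] (B : Matrix (Fin d) (Fin d) ℂ) (s : ZMod N)
    (f g : ZMod N → Fin d) :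
    sliceLocal N d B s f g = if ∀ t ≠ s, f t = g t then B (f s) (g s) else 0 := by
  have hrest : ∏ t ∈ {s}ᶜ, (if t = s then B else 1) (f t) (g t) =
      ∏ t ∈ {s}ᶜ, if f t = g t then 1 else 0 :=
    Finset.prod_congr rfl fun t ht => by
      rw [if_neg (Finset.mem_compl.1 ht <| Finset.mem_singleton.2 ·), one_apply]
  rw [sliceLocal, sliceProd, of_apply, Fintype.prod_eq_mul_prod_compl s, if_pos rfl, hrest,
    Finset.prod_boole]
  simp [mul_ite]

lemma mul_timeShift_apply (N d : ℕ) [NeZero N]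
    (A : Matrix (ZMod N → Fin d) (ZMod N → Fin d) ℂ) (f g : ZMod N → Fin d) :
    (A * timeShift N d) f g = A f (fun t => g (t - 1)) := by
  simp [mul_apply, timeShift, ← funext_iff]

lemma ZMod.forall_ne_zero_apply_eq_apply_sub_one_iff {N : ℕ} [NeZero N] {α : Type*}
    (f : ZMod N → α) : (∀ t ≠ 0, f t = f (t - 1)) ↔ f = Function.const _ (f 0) := by
  refine ⟨fun h => funext fun t => ?_, fun h t _ => by rw [h]; rfl⟩
  suffices ∀ k < N, f k = f 0 by simpa using this t.val t.val_lt
  intro k hk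
  induction k with
  | zero => simp
  | succ k ih =>
    have hne : ((k + 1 : ℕ) : ZMod N) ≠ 0 := by
      rw [Ne, ZMod.natCast_eq_zero_iff]
      exact Nat.not_dvd_of_pos_of_lt k.succ_pos hk
    rw [h _ hne, Nat.cast_succ, add_sub_cancel_right]
    exact ih (by omega)

lemma Fintype.sum_ite_eq_const {ι α M : Type*} [Fintype ι] [DecidableEq ι] [Fintype α]
    [DecidableEq α] [AddCommMonoid M] (i : ι) (g : α → M) :
    ∑ f : ι → α, (if f = Function.const ι (f i) then g (f i) else 0) = ∑ a, g a := by
  rw [← Finset.sum_filter]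
  refine Finset.sum_nbij' (· i) (Function.const ι) (by simp) (by simp) (fun f hf => ?_)
    (by simp) (fun _ _ => rfl)
  exact (Finset.mem_filter.1 hf).2.symm

lemma trace_sliceLocal_zero_mul_timeShift (N d : ℕ) [NeZero N] (ρ : Matrix (Fin d) (Fin d) ℂ) :
    trace (sliceLocal N d ρ 0 * timeShift N d) = trace ρ := by
  have hdiag : ∀ f, (sliceLocal N d ρ 0 * timeShift N d) f f =
      if f = Function.const _ (f 0) then ρ (f 0) (f 0) else 0 := fun f => by
    simp only [mul_timeShift_apply, sliceLocal_apply,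
      ZMod.forall_ne_zero_apply_eq_apply_sub_one_iff]
    split_ifs with hf
    · rw [congrFun hf (0 - 1)]; rfl
    · rfl
  simp only [trace, diag_apply, hdiag]
  exact Fintype.sum_ite_eq_const 0 fun c => ρ c c

lemma Matrix.exp_mul_conjTranspose_exp {n 𝕂 : Type*} [Fintype n] [DecidableEq n] [RCLike 𝕂]
    {A : Matrix n n 𝕂} (hA : Aᴴ = -A) : exp A * (exp A)ᴴ = 1 := by
  rw [← exp_conjTranspose, hA, ← exp_add_of_commute _ _ ((Commute.refl A).neg_right),
    add_neg_cancel, NormedSpace.exp_zero]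

lemma Matrix.IsHermitian.conjTranspose_I_mul_smul {n : Type*} {H : Matrix n n ℂ}
    (hH : H.IsHermitian) (r : ℝ) : ((I * r) • H)ᴴ = -((I * r) • H) := by
  rw [conjTranspose_smul, hH.eq, ← neg_smul]
  simp

lemma Vop_mul_sliceLocal_zero_mul_conjTranspose (N d : ℕ) [NeZero N]
    {H : Matrix (Fin d) (Fin d) ℂ} (hH : H.IsHermitian) (ε : ℝ) (ρ : Matrix (Fin d) (Fin d) ℂ) :
    Vop N d H ε * sliceLocal N d ρ 0 * (Vop N d H ε)ᴴ = sliceLocal N d ρ 0 := by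
  rw [Vop, sliceLocal, conjTranspose_sliceProd, sliceProd_mul_sliceProd, sliceProd_mul_sliceProd]
  congr 1
  funext t
  split_ifs with ht
  · simp [ht]
  · rw [mul_one]
    have hscalar : I * ε * t.val = I * ((ε * t.val : ℝ) : ℂ) := by push_cast; ring
    exact exp_mul_conjTranspose_exp (hscalar ▸ hH.conjTranspose_I_mul_smul _)

lemma trace_Gst (N d : ℕ) [NeZero N] {H : Matrix (Fin d) (Fin d) ℂ} (hH : H.IsHermitian)
    (ε : ℝ) (ρ : Matrix (Fin d) (Fin d) ℂ) : trace (Gst N d H ε ρ) = trace ρ := by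
  rw [Gst, ← mul_assoc, ← mul_assoc, trace_mul_comm, ← mul_assoc, ← mul_assoc,
    Vop_mul_sliceLocal_zero_mul_conjTranspose N d hH, trace_sliceLocal_zero_mul_timeShift]

lemma star_PhiPlus_dotProduct (N d : ℕ) [NeZero N]
    (A : Matrix (ZMod N → Fin d) (ZMod N → Fin d) ℂ) :
    star (PhiPlus N d) ⬝ᵥ (fun p => A p.1 p.2) = trace A := by
  simp [dotProduct, PhiPlus, Fintype.sum_prod_type, trace]

lemma sum_mul_star_PhiPlus (N d : ℕ) [NeZero N]
    (A : Matrix (ZMod N → Fin d) (ZMod N → Fin d) ℂ) (f g : ZMod N → Fin d) :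
    ∑ h, A f h * star (PhiPlus N d) (g, h) = A f g := by
  simp [PhiPlus]

section RankOne

variable {n K : Type*} [Fintype n] [Field K] {u v : n → K}

lemma inv_dotProduct_smul_vecMulVec_mul_self (h : v ⬝ᵥ u ≠ 0) :
    ((v ⬝ᵥ u)⁻¹ • vecMulVec u v) * ((v ⬝ᵥ u)⁻¹ • vecMulVec u v) =
      (v ⬝ᵥ u)⁻¹ • vecMulVec u v := by
  rw [smul_mul_smul_comm, vecMulVec_mul_vecMulVec, vecMulVec_smul, smul_smul,
    inv_mul_cancel_right₀ h]

lemma trace_inv_dotProduct_smul_vecMulVec (h : v ⬝ᵥ u ≠ 0) :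
    trace ((v ⬝ᵥ u)⁻¹ • vecMulVec u v) = 1 := by
  rw [trace_smul, trace_vecMulVec, dotProduct_comm u, smul_eq_mul, inv_mul_cancel₀ h]

end RankOne

theorem generalized_spacetime_state_general (N d : ℕ) [NeZero N]
    (H : Matrix (Fin d) (Fin d) ℂ) (hH : H.IsHermitian) (ε : ℝ)
    (ρ : Matrix (Fin d) (Fin d) ℂ) (hρ : Matrix.trace ρ ≠ 0) :
    (dotProduct (star (PhiPlus N d)) (PsiVec N d H ε ρ) =
        Matrix.trace (Gst N d H ε ρ) ∧
      Matrix.trace (Gst N d H ε ρ) = Matrix.trace ρ) ∧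
    Rst N d H ε ρ * Rst N d H ε ρ = Rst N d H ε ρ ∧
    Matrix.trace (Rst N d H ε ρ) = 1 ∧
    (Matrix.of fun f g => ∑ h : ZMod N → Fin d,
        Rst N d H ε ρ (f, h) (g, h)) =
      (Matrix.trace ρ)⁻¹ • Gst N d H ε ρ := by
  have hdot : star (PhiPlus N d) ⬝ᵥ PsiVec N d H ε ρ = trace (Gst N d H ε ρ) :=
    star_PhiPlus_dotProduct N d _
  have htr := trace_Gst N d hH ε ρ
  have hne : star (PhiPlus N d) ⬝ᵥ PsiVec N d H ε ρ ≠ 0 := hdot.trans htr ▸ hρ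
  refine ⟨⟨hdot, htr⟩, inv_dotProduct_smul_vecMulVec_mul_self hne,
    trace_inv_dotProduct_smul_vecMulVec hne, ?_⟩
  ext f g
  simp only [of_apply, Rst, Matrix.smul_apply, vecMulVec_apply, smul_eq_mul, ← Finset.mul_sum,
    PsiVec, hdot, htr, sum_mul_star_PhiPlus]

/-- The generalized state `R` is a (non-Hermitian) rank-one projector purifying the
spacetime state `G = ρ₀ e^{iS̃}`: `⟨Φ⁺|Ψ⟩ = Tr G = tr ρ`, `R² = R`, `Tr R = 1`, and
the partial trace of `R` over the environment factor equals `(tr ρ)⁻¹ G`. -/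
theorem generalized_spacetime_state (N d : ℕ) [NeZero N] (hd : 1 ≤ d)
    (H : Matrix (Fin d) (Fin d) ℂ) (hH : H.IsHermitian) (ε : ℝ)
    (ρ : Matrix (Fin d) (Fin d) ℂ) (hρ : Matrix.trace ρ ≠ 0) :
    (dotProduct (star (PhiPlus N d)) (PsiVec N d H ε ρ) =
        Matrix.trace (Gst N d H ε ρ) ∧
      Matrix.trace (Gst N d H ε ρ) = Matrix.trace ρ) ∧
    Rst N d H ε ρ * Rst N d H ε ρ = Rst N d H ε ρ ∧
    Matrix.trace (Rst N d H ε ρ) = 1 ∧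
    (Matrix.of fun f g => ∑ h : ZMod N → Fin d,
        Rst N d H ε ρ (f, h) (g, h)) =
      (Matrix.trace ρ)⁻¹ • Gst N d H ε ρ :=
  generalized_spacetime_state_general N d H hH ε ρ hρ
end

section
/- Let H : Matrix (Fin d) (Fin d) ℂ be Hermitian, ε ∈ ℝ, ρ : Matrix (Fin d) (Fin d) ℂ, and O : ZMod N → Matrix (Fin d) (Fin d) ℂ an arbitrary family of operators. Then the spacetime correlator equals the overlap of Choi vectors and equals the time-ordered Heisenberg correlator: Tr( G * (⊗_t O t) ) = ⟨Φ⁺, ((⊗_t O t) ⊗ 1) Ψ⟩ = tr( (∏_{k = N−1, …, 1} Matrix.exp((i·ε·k) • H) * O k * Matrix.exp(−(i·ε·k) • H)) * O 0 * ρ ), where Φ⁺ is the vector on the doubled index set with entries Φ⁺ (f, h) = δ_{f h}, Ψ is the vector with entries Ψ (f, h) = G f h, ((⊗_t O t) ⊗ 1) ((f,h),(g,h')) := (⊗_t O t) f g · δ_{h h'}, and the product over k on the right runs in strictly decreasing order (time ordering of the Heisenberg operators O(εk) = e^{iεkH} O e^{−iεkH}). -/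
open Matrix Complex NormedSpace

/-- The operator `(⊗_t O t) ⊗ 1` acting on the doubled space. -/
noncomputable def extOp (N d : ℕ) [NeZero N]
    (O : ZMod N → Matrix (Fin d) (Fin d) ℂ) :
    Matrix ((ZMod N → Fin d) × (ZMod N → Fin d))
      ((ZMod N → Fin d) × (ZMod N → Fin d)) ℂ :=
  Matrix.of fun p q => sliceProd N d O p.1 q.1 * (if p.2 = q.2 then 1 else 0)

/-! Writing `𝒱ᴴ` and `ρ₀` as slice products gives `G (⊗ O) = (⊗ A) 𝒮 (⊗ B)` with
`A_t = ρ_t e^{-iεtH}` and `B_t = e^{iεtH} O_t`, so the correlator is `Tr(𝒮 ⊗_t C_t)` for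
`C_t = B_t A_t = e^{iεtH} O_t ρ_t e^{-iεtH}` (where `ρ_0 = ρ` and `ρ_t = 1` otherwise).
The shift `𝒮` glues slice `t` to slice `t + 1`, so this trace is the sum over closed paths
`f : ZMod N → Fin d` of `∏_t C_t (f (t + 1)) (f t)`, which is the expansion of the trace of the
ordered product `C_{N-1} ⋯ C_1 C_0`. The Choi-vector form is `Tr(M X) = ⟨Φ⁺, (X ⊗ 1) vec M⟩`. -/

theorem Fin.snoc_apply_zero_succ {α : Type*} {n : ℕ} (f : Fin (n + 1) → α) (i : Fin (n + 1)) :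
    Fin.snoc (α := fun _ => α) f (f 0) i.succ = f (i + 1) := by
  induction i using Fin.lastCases with
  | last => rw [Fin.succ_last, Fin.snoc_last, Fin.last_add_one]
  | cast j => rw [Fin.succ_castSucc, Fin.snoc_castSucc, Fin.coeSucc_eq_succ]

theorem List.prod_map_range_succ_reverse {M : Type*} [Monoid M] (C : ℕ → M) (n : ℕ) :
    ((List.range (n + 1)).reverse.map C).prod =
      ((List.range n).reverse.map (fun m => C (m + 1))).prod * C 0 := by
  rw [List.range_succ_eq_map, List.reverse_cons, List.map_append, List.prod_append,
    ← List.map_reverse, List.map_map]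
  simp [Function.comp_def]

namespace Matrix

variable {ι R : Type*} [Fintype ι] [DecidableEq ι] [CommSemiring R]

theorem list_prod_range_reverse_apply (C : ℕ → Matrix ι ι R) (n : ℕ) (x y : ι) :
    ((List.range n).reverse.map C).prod x y =
      ∑ g : Fin (n + 1) → ι, if g 0 = y ∧ g (Fin.last n) = x then
        ∏ i : Fin n, C i (g i.succ) (g i.castSucc) else 0 := by
  induction n generalizing C x y with
  | zero =>
    rw [← (Equiv.funUnique (Fin 1) ι).symm.sum_comp]
    simp [one_apply, ite_and, eq_comm]
  | succ n ih =>
    rw [List.prod_map_range_succ_reverse, mul_apply, ← (Fin.consEquiv fun _ => ι).sum_comp,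
      Fintype.sum_prod_type]
    simp only [ih, Finset.sum_mul, Fin.consEquiv_apply, Fin.cons_zero, ← Fin.succ_last,
      Fin.cons_succ, Fin.prod_univ_succ, Fin.castSucc_zero, ← Fin.succ_castSucc, Fin.val_succ,
      ite_mul, zero_mul, and_comm (b := _ = x)]
    rw [Finset.sum_comm]
    conv_rhs => rw [Finset.sum_comm]
    refine Finset.sum_congr rfl fun g _ => ?_
    by_cases hg : g (Fin.last n) = x <;> simp [hg, mul_comm]

theorem trace_list_prod_range_reverse (C : ℕ → Matrix ι ι R) (n : ℕ) :
    trace ((List.range (n + 1)).reverse.map C).prod =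
      ∑ f : Fin (n + 1) → ι, ∏ i : Fin (n + 1), C i (f (i + 1)) (f i) := by
  have closed_paths : trace ((List.range (n + 1)).reverse.map C).prod =
      ∑ g : Fin (n + 2) → ι, if g 0 = g (Fin.last (n + 1)) then
        ∏ i : Fin (n + 1), C i (g i.succ) (g i.castSucc) else 0 := by
    simp only [trace, diag_apply, list_prod_range_reverse_apply]
    rw [Finset.sum_comm]
    refine Finset.sum_congr rfl fun g _ => ?_
    simp [ite_and, eq_comm]
  rw [closed_paths, ← (Fin.snocEquiv fun _ => ι).sum_comp, Fintype.sum_prod_type, Finset.sum_comm]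
  refine Finset.sum_congr rfl fun f _ => ?_
  simp only [Fin.snocEquiv_apply, Fin.snoc_last, ← Fin.castSucc_zero, Fin.snoc_castSucc,
    Fin.snoc_apply_zero_succ, Finset.sum_ite_eq, Finset.mem_univ, if_true]

end Matrix

theorem Matrix.IsHermitian.conjTranspose_exp_smul {n : Type*} [Fintype n] [DecidableEq n]
    {H : Matrix n n ℂ} (hH : H.IsHermitian) (z : ℂ) :
    (NormedSpace.exp (z • H))ᴴ = NormedSpace.exp (star z • H) := by
  rw [← Matrix.exp_conjTranspose, conjTranspose_smul, hH.eq]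

section
variable {N d : ℕ} [NeZero N]

theorem sliceProd_mul (A B : ZMod N → Matrix (Fin d) (Fin d) ℂ) :
    sliceProd N d A * sliceProd N d B = sliceProd N d (fun t => A t * B t) := by
  ext f g
  simp only [sliceProd, mul_apply, of_apply, Finset.prod_mul_distrib.symm]
  rw [Finset.prod_univ_sum, Fintype.piFinset_univ]

theorem sliceProd_conjTranspose (A : ZMod N → Matrix (Fin d) (Fin d) ℂ) :
    (sliceProd N d A)ᴴ = sliceProd N d (fun t => (A t)ᴴ) := by
  ext f g
  simp [sliceProd, star_prod]

theorem timeShift_mul_sliceProd_apply (A : ZMod N → Matrix (Fin d) (Fin d) ℂ)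
    (f g : ZMod N → Fin d) :
    (timeShift N d * sliceProd N d A) f g = ∏ t, A t (f (t + 1)) (g t) := by
  rw [mul_apply, Finset.sum_eq_single fun t => f (t + 1)]
  · simp [timeShift, sliceProd]
  · intro h _ hne
    rw [timeShift, of_apply, if_neg, zero_mul]
    intro hf
    exact hne (funext fun t => by rw [hf, add_sub_cancel_right])
  · simp

theorem trace_timeShift_mul_sliceProd_s11 (C : ℕ → Matrix (Fin d) (Fin d) ℂ) :
    trace (timeShift N d * sliceProd N d (fun t => C t.val)) =
      trace ((List.range N).reverse.map C).prod := by
  obtain ⟨n, rfl⟩ := Nat.exists_eq_succ_of_ne_zero (NeZero.ne N)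
  simp only [trace, diag_apply, timeShift_mul_sliceProd_apply]
  -- `ZMod (n + 1)` is `Fin (n + 1)` by definition, with the same `+` and `val`.
  exact (trace_list_prod_range_reverse C n).symm

theorem dotProduct_star_phiPlus_extOp_mulVec (O : ZMod N → Matrix (Fin d) (Fin d) ℂ)
    (M : Matrix (ZMod N → Fin d) (ZMod N → Fin d) ℂ) :
    star (PhiPlus N d) ⬝ᵥ (extOp N d O *ᵥ fun p => M p.1 p.2) =
      trace (M * sliceProd N d O) := by
  rw [trace_mul_comm]
  simp [dotProduct, mulVec, PhiPlus, extOp, trace, mul_apply, Fintype.sum_prod_type,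
    apply_ite (star : ℂ → ℂ)]

theorem Vop_conjTranspose {H : Matrix (Fin d) (Fin d) ℂ} (hH : H.IsHermitian) (ε : ℝ) :
    (Vop N d H ε)ᴴ = sliceProd N d fun t => exp ((-(I * ε * t.val)) • H) := by
  rw [Vop, sliceProd_conjTranspose]
  congr! 2 with t
  rw [hH.conjTranspose_exp_smul]
  simp [-ZMod.natCast_val]

noncomputable def heisenbergTransfer (H : Matrix (Fin d) (Fin d) ℂ) (ε : ℝ)
    (ρ : Matrix (Fin d) (Fin d) ℂ) (O : ZMod N → Matrix (Fin d) (Fin d) ℂ) (m : ℕ) :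
    Matrix (Fin d) (Fin d) ℂ :=
  exp ((I * ε * m) • H) * O m * (if m = 0 then ρ else 1) * exp ((-(I * ε * m)) • H)

theorem trace_Gst_mul_sliceProd {H : Matrix (Fin d) (Fin d) ℂ} (hH : H.IsHermitian) (ε : ℝ)
    (ρ : Matrix (Fin d) (Fin d) ℂ) (O : ZMod N → Matrix (Fin d) (Fin d) ℂ) :
    trace (Gst N d H ε ρ * sliceProd N d O) =
      trace ((List.range N).reverse.map (heisenbergTransfer H ε ρ O)).prod := by
  have split : Gst N d H ε ρ * sliceProd N d O =
      sliceProd N d (fun t => (if t = 0 then ρ else 1) * exp ((-(I * ε * t.val)) • H)) *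
        timeShift N d * sliceProd N d (fun t => exp ((I * ε * t.val) • H) * O t) := by
    rw [Gst, sliceLocal, Vop_conjTranspose hH, Vop, ← sliceProd_mul, ← sliceProd_mul]
    noncomm_ring
  have slice_step (t : ZMod N) :
      exp ((I * ε * t.val) • H) * O t * ((if t = 0 then ρ else 1) * exp ((-(I * ε * t.val)) • H)) =
        heisenbergTransfer H ε ρ O t.val := by
    simp only [heisenbergTransfer, ZMod.natCast_zmod_val, ZMod.val_eq_zero, Matrix.mul_assoc]
  rw [split, trace_mul_cycle, sliceProd_mul, trace_mul_comm]
  simp only [slice_step]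
  exact trace_timeShift_mul_sliceProd_s11 _

end

theorem spacetime_correlator_choi_general (N d : ℕ) [NeZero N]
    (H : Matrix (Fin d) (Fin d) ℂ) (hH : H.IsHermitian) (ε : ℝ)
    (ρ : Matrix (Fin d) (Fin d) ℂ)
    (O : ZMod N → Matrix (Fin d) (Fin d) ℂ) :
    Matrix.trace (Gst N d H ε ρ * sliceProd N d O) =
        dotProduct (star (PhiPlus N d))
          (extOp N d O *ᵥ PsiVec N d H ε ρ) ∧
      Matrix.trace (Gst N d H ε ρ * sliceProd N d O) =
        Matrix.trace
          ((((List.range (N - 1)).reverse.map (fun (m : ℕ) =>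
              NormedSpace.exp ((Complex.I * (ε : ℂ) * ((m : ℂ) + 1)) • H) *
                O ((m + 1 : ℕ) : ZMod N) *
                NormedSpace.exp ((-(Complex.I * (ε : ℂ) * ((m : ℂ) + 1))) • H))).prod) *
            O 0 * ρ) := by
  refine ⟨(dotProduct_star_phiPlus_extOp_mulVec O _).symm, ?_⟩
  obtain ⟨n, rfl⟩ := Nat.exists_eq_succ_of_ne_zero (NeZero.ne N)
  rw [trace_Gst_mul_sliceProd hH, List.prod_map_range_succ_reverse, Nat.succ_sub_one]
  simp [heisenbergTransfer, Matrix.mul_assoc]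

/-- The spacetime correlator equals the overlap of Choi vectors and equals the
time-ordered Heisenberg correlator:
`Tr(G ⊗_t O t) = ⟨Φ⁺, ((⊗_t O t) ⊗ 1) Ψ⟩
  = tr((∏_{k=N−1,…,1} e^{iεkH} O_k e^{−iεkH}) O_0 ρ)`,
the product over `k` running in strictly decreasing (time-ordered) order. -/
theorem spacetime_correlator_choi (N d : ℕ) [NeZero N] (hd : 1 ≤ d)
    (H : Matrix (Fin d) (Fin d) ℂ) (hH : H.IsHermitian) (ε : ℝ)
    (ρ : Matrix (Fin d) (Fin d) ℂ)
    (O : ZMod N → Matrix (Fin d) (Fin d) ℂ) :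
    Matrix.trace (Gst N d H ε ρ * sliceProd N d O) =
        dotProduct (star (PhiPlus N d))
          (extOp N d O *ᵥ PsiVec N d H ε ρ) ∧
      Matrix.trace (Gst N d H ε ρ * sliceProd N d O) =
        Matrix.trace
          ((((List.range (N - 1)).reverse.map (fun (m : ℕ) =>
              NormedSpace.exp ((Complex.I * (ε : ℂ) * ((m : ℂ) + 1)) • H) *
                O ((m + 1 : ℕ) : ZMod N) *
                NormedSpace.exp ((-(Complex.I * (ε : ℂ) * ((m : ℂ) + 1))) • H))).prod) *
            O 0 * ρ) :=
  spacetime_correlator_choi_general N d H hH ε ρ O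
end

section
/- The free-energy functional is stationary at the normalized exponential of minus the quantum action: the function f : ℝ → ℝ defined in the context is differentiable at s = 0 with derivative 0 (HasDerivAt f 0 0). Equivalently, along any exponential family of normalized generalized states Γ_s = e^{−(S + sK)} / Tr[e^{−(S+sK)}] through Γ* = e^{−S}/Tr[e^{−S}], the functional F[Γ] = Tr[Γ S] + Tr[Γ log Γ] has vanishing first variation at Γ*. -/
/-!
Write `Z(s)` for the partition function and `g(s) = Re Tr[e^{-(S+sK)} K]`, so that
`f(s) = -s g(s)/Z(s) - log Z(s)`. The first term vanishes at `0`, so its derivative there is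
`-g(0)/Z(0)` as soon as `g/Z` is continuous. Although `S` and `K` need not commute, the cyclicity
of the trace gives `d/ds Tr[(A + sB)^n] = n Tr[(A + sB)^(n-1) B]`, and differentiating the
exponential series term by term yields `Z'(0) = -g(0)`. The two contributions cancel, and
`Z(0) > 0` because `e^{-S} = B^* B` with `B = e^{-S/2}` invertible.
-/

open scoped Nat ComplexOrder

section Tracial

variable {𝕂 𝔸 E : Type*} [RCLike 𝕂] [NormedRing 𝔸] [NormedAlgebra 𝕂 𝔸]
  [NormedAddCommGroup E] [NormedSpace 𝕂 E] {τ : 𝔸 →L[𝕂] E}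

theorem map_sum_pow_mul_pow_of_tracial (hτ : ∀ a b, τ (a * b) = τ (b * a)) (z w : 𝔸) (n : ℕ) :
    τ (∑ i ∈ Finset.range n, z ^ (n.pred - i) * w * z ^ i) = n • τ (z ^ n.pred * w) := by
  have cyclic : ∀ i ∈ Finset.range n, τ (z ^ (n.pred - i) * w * z ^ i) = τ (z ^ n.pred * w) := by
    intro i hi
    rw [hτ, ← mul_assoc, ← pow_add,
      Nat.add_sub_cancel' (Nat.le_pred_of_lt (Finset.mem_range.mp hi))]
  rw [map_sum, Finset.sum_congr rfl cyclic, Finset.sum_const, Finset.card_range]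

theorem HasDerivAt.map_pow_of_tracial (hτ : ∀ a b, τ (a * b) = τ (b * a)) {f : 𝕂 → 𝔸}
    {f' : 𝔸} {t : 𝕂} (hf : HasDerivAt f f' t) (n : ℕ) :
    HasDerivAt (fun s => τ (f s ^ n)) (n • τ (f t ^ n.pred * f')) t := by
  rw [← map_sum_pow_mul_pow_of_tracial hτ]
  exact τ.hasFDerivAt.comp_hasDerivAt t (hf.fun_pow' n)

theorem inv_factorial_succ_smul_succ_nsmul (k : ℕ) (v : E) :
    (((k + 1)! : 𝕂)⁻¹) • ((k + 1) • v) = ((k ! : 𝕂)⁻¹) • v := by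
  rw [← Nat.cast_smul_eq_nsmul 𝕂, smul_smul]
  congr 1
  push_cast [Nat.factorial_succ]
  field_simp

theorem norm_inv_factorial_smul_nsmul_map_pow_mul_le [NormOneClass 𝔸] {z y : 𝔸} {c : ℝ}
    (hz : ‖z‖ ≤ c) (n : ℕ) :
    ‖(n !⁻¹ : 𝕂) • (n • τ (z ^ n.pred * y))‖ ≤ ‖τ‖ * ‖y‖ * (c ^ n.pred / n.pred !) := by
  cases n with
  | zero => simp only [zero_smul, smul_zero, norm_zero, Nat.pred_zero, pow_zero]; positivity
  | succ k =>
    rw [inv_factorial_succ_smul_succ_nsmul, norm_smul, norm_inv, RCLike.norm_natCast,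
      Nat.pred_succ]
    calc (k ! : ℝ)⁻¹ * ‖τ (z ^ k * y)‖ ≤ (k ! : ℝ)⁻¹ * (‖τ‖ * (‖z‖ ^ k * ‖y‖)) := by
          gcongr
          refine (τ.le_opNorm _).trans ?_
          gcongr
          exact (norm_mul_le _ _).trans (by gcongr; exact norm_pow_le _ _)
      _ ≤ (k ! : ℝ)⁻¹ * (‖τ‖ * (c ^ k * ‖y‖)) := by gcongr
      _ = ‖τ‖ * ‖y‖ * (c ^ k / k !) := by ring

theorem hasDerivAt_map_exp_add_smul_of_tracial [CompleteSpace 𝔸] [NormOneClass 𝔸]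
    [CompleteSpace E] (hτ : ∀ a b, τ (a * b) = τ (b * a)) (x y : 𝔸) :
    HasDerivAt (fun t : 𝕂 => τ (NormedSpace.exp (x + t • y))) (τ (NormedSpace.exp x * y)) 0 := by
  set c := ‖x‖ + ‖y‖
  let g : ℕ → 𝕂 → E := fun n t => (n !⁻¹ : 𝕂) • τ ((x + t • y) ^ n)
  let g' : ℕ → 𝕂 → E := fun n t => (n !⁻¹ : 𝕂) • (n • τ ((x + t • y) ^ n.pred * y))
  have g'_succ : ∀ k t, g' (k + 1) t = (k !⁻¹ : 𝕂) • τ ((x + t • y) ^ k * y) := fun k t =>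
    inv_factorial_succ_smul_succ_nsmul k _
  have hline : ∀ t : 𝕂, HasDerivAt (fun s : 𝕂 => x + s • y) y t := fun t => by
    simpa using ((hasDerivAt_id t).smul_const y).const_add x
  have hg : ∀ n t, t ∈ Metric.ball (0 : 𝕂) 1 → HasDerivAt (g n) (g' n t) t :=
    fun n t _ => ((hline t).map_pow_of_tracial hτ n).const_smul _
  have hg' : ∀ n t, t ∈ Metric.ball (0 : 𝕂) 1 →
      ‖g' n t‖ ≤ ‖τ‖ * ‖y‖ * (c ^ n.pred / n.pred !) := by
    intro n t ht
    have hz : ‖x + t • y‖ ≤ c := by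
      have ht : ‖t‖ ≤ 1 := (mem_ball_zero_iff.mp ht).le
      calc ‖x + t • y‖ ≤ ‖x‖ + ‖t‖ * ‖y‖ := (norm_add_le _ _).trans_eq (by rw [norm_smul])
        _ ≤ c := add_le_add_right (mul_le_of_le_one_left (norm_nonneg y) ht) _
    exact norm_inv_factorial_smul_nsmul_map_pow_mul_le hz n
  have hu : Summable fun n : ℕ => ‖τ‖ * ‖y‖ * (c ^ n.pred / n.pred !) :=
    ((summable_nat_add_iff (f := fun n : ℕ => c ^ n.pred / n.pred !) 1).mp
      (Real.summable_pow_div_factorial c)).mul_left _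
  have hg0 : Summable fun n => g n 0 := by
    simpa [g] using τ.summable (NormedSpace.expSeries_summable' (𝕂 := 𝕂) x)
  have hsum : HasSum (fun n => g' n 0) (τ (NormedSpace.exp x * y)) := by
    refine (hasSum_nat_add_iff' 1).mp ?_
    simp only [g'_succ, Finset.range_one, Finset.sum_singleton, g', zero_smul, smul_zero,
      sub_zero, add_zero]
    simpa only [smul_mul_assoc, map_smul] using
      τ.hasSum ((NormedSpace.exp_series_hasSum_exp' (𝕂 := 𝕂) x).mul_right y)
  have := hasDerivAt_tsum_of_isPreconnected hu Metric.isOpen_ball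
    (convex_ball 0 1).isPreconnected hg hg' (Metric.mem_ball_self one_pos) hg0
    (Metric.mem_ball_self one_pos)
  rw [hsum.tsum_eq] at this
  convert this using 2 with t
  rw [NormedSpace.exp_eq_tsum 𝕂, τ.map_tsum (NormedSpace.expSeries_summable' _)]
  simp only [map_smul, g]

end Tracial

theorem hasDerivAt_id_smul_of_continuousAt {𝕜 F : Type*} [NontriviallyNormedField 𝕜]
    [NormedAddCommGroup F] [NormedSpace 𝕜 F] {h : 𝕜 → F} (hh : ContinuousAt h 0) :
    HasDerivAt (fun s => s • h s) (h 0) 0 := by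
  rw [hasDerivAt_iff_tendsto_slope]
  refine (hh.mono_left nhdsWithin_le_nhds).congr' ?_
  filter_upwards [self_mem_nhdsWithin] with s hs
  simp [slope_def_module, smul_smul, inv_mul_cancel₀ hs]

namespace Matrix

variable {ι 𝕜 : Type*} [Fintype ι] [DecidableEq ι] [RCLike 𝕜]

theorem IsHermitian.posDef_exp {A : Matrix ι ι 𝕜} (hA : A.IsHermitian) :
    (NormedSpace.exp A).PosDef := by
  set B := NormedSpace.exp ((2⁻¹ : ℝ) • A)
  have hB : B.IsHermitian := (hA.smul (IsSelfAdjoint.all _)).exp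
  have hsq : NormedSpace.exp A = Bᴴ * B := by
    rw [hB.eq, ← Matrix.exp_add_of_commute _ _ (Commute.refl _), ← add_smul]
    norm_num
  rw [hsq]
  exact .conjTranspose_mul_self B (mulVec_injective_iff_isUnit.mpr (Matrix.isUnit_exp _))

theorem IsHermitian.re_trace_exp_pos [Nonempty ι] {A : Matrix ι ι 𝕜} (hA : A.IsHermitian) :
    0 < RCLike.re (NormedSpace.exp A).trace :=
  (RCLike.pos_iff.mp hA.posDef_exp.trace_pos).1

section
open scoped Norms.Operator

theorem continuous_exp : Continuous (NormedSpace.exp : Matrix ι ι 𝕜 → Matrix ι ι 𝕜) :=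
  NormedSpace.exp_continuous

theorem hasDerivAt_re_trace_exp_add_smul [Nonempty ι] (A B : Matrix ι ι 𝕜) :
    HasDerivAt (fun s : ℝ => RCLike.re (NormedSpace.exp (A + s • B)).trace)
      (RCLike.re (NormedSpace.exp A * B).trace) 0 :=
  hasDerivAt_map_exp_add_smul_of_tracial
    (τ := RCLike.reCLM.comp (LinearMap.toContinuousLinearMap (traceLinearMap ι ℝ 𝕜)))
    (fun a b => by simp [trace_mul_comm a b]) A B

end

end Matrix

theorem free_energy_stationary_at_action_general {ι : Type*} [Fintype ι] [DecidableEq ι]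
    [Nonempty ι] (S K : Matrix ι ι ℂ) (hS : S.IsHermitian) :
    HasDerivAt (fun s : ℝ =>
      -s * (Matrix.trace (NormedSpace.exp (-(S + s • K)) * K)).re /
          (Matrix.trace (NormedSpace.exp (-(S + s • K)))).re -
        Real.log (Matrix.trace (NormedSpace.exp (-(S + s • K)))).re) 0 0 := by
  have hexponent : ∀ s : ℝ, -(S + s • K) = -S + s • -K := fun s => by rw [neg_add, smul_neg]
  set Z : ℝ → ℝ := fun s => (NormedSpace.exp (-S + s • -K)).trace.re
  set g : ℝ → ℝ := fun s => (NormedSpace.exp (-S + s • -K) * K).trace.re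
  have hZ0 : 0 < Z 0 := by simpa [Z] using hS.neg.re_trace_exp_pos
  have hZ : HasDerivAt Z (-g 0) 0 := by
    simpa [Z, g] using Matrix.hasDerivAt_re_trace_exp_add_smul (-S) (-K)
  have hexp : Continuous fun s : ℝ => NormedSpace.exp (-S + s • -K) :=
    Matrix.continuous_exp.comp (by fun_prop)
  have hratio : ContinuousAt (fun s => -(g s / Z s)) 0 :=
    ((Complex.continuous_re.comp (hexp.mul continuous_const).matrix_trace).continuousAt.div
      (Complex.continuous_re.comp hexp.matrix_trace).continuousAt hZ0.ne').neg
  have hf := (hasDerivAt_id_smul_of_continuousAt hratio).sub (hZ.log hZ0.ne')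
  rw [show -(g 0 / Z 0) - -g 0 / Z 0 = 0 by ring] at hf
  refine hf.congr_of_eventuallyEq (.of_forall fun s => ?_)
  simp only [g, Z, hexponent, smul_eq_mul, Pi.sub_apply]
  ring

/-- Stationarity of the free-energy functional at the normalized exponential of minus
the quantum action: for Hermitian `S, K`, the function
`f(s) = −s·Re Tr[e^{−(S+sK)} K]/Z(s) − log Z(s)` with
`Z(s) = Re Tr[e^{−(S+sK)}]` — i.e. the functional
`F[Γ_s] = Tr[Γ_s S] + Tr[Γ_s log Γ_s]` along the exponential family
`Γ_s = e^{−(S+sK)}/Tr[e^{−(S+sK)}]` — has vanishing derivative at `s = 0`. -/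
theorem free_energy_stationary_at_action {ι : Type*} [Fintype ι] [DecidableEq ι]
    [Nonempty ι] (S K : Matrix ι ι ℂ) (hS : S.IsHermitian) (hK : K.IsHermitian) :
    HasDerivAt (fun s : ℝ =>
      -s * (Matrix.trace (NormedSpace.exp (-(S + s • K)) * K)).re /
          (Matrix.trace (NormedSpace.exp (-(S + s • K)))).re -
        Real.log (Matrix.trace (NormedSpace.exp (-(S + s • K)))).re) 0 0 :=
  free_energy_stationary_at_action_general S K hS
end

section
/- Let d ≥ 1, U : Matrix (Fin d) (Fin d) ℂ arbitrary, and ρ : Matrix (Fin d) (Fin d) ℂ Hermitian. Define the Jamiolkowski operator J := Σ_{i,j ∈ Fin d} (Uᴴ * E i j * U) ⊗ₖ (E j i) and the timelike-entanglement operator T := J * (ρ ⊗ₖ 1). Then: (i) J = SWAP * (U ⊗ₖ Uᴴ); and (ii) T = ( (ρ ⊗ₖ 1) * (Uᴴ ⊗ₖ U) * SWAP )ᴴ, i.e. T equals the conjugate transpose of the two-time spacetime state ρ₀ e^{iS̃} = (ρ ⊗ 1)(U† ⊗ U)·SWAP of the spacetime formalism (with U = e^{−iεH} for the case N = 2). 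-/
/-!
Since `SWAP = Σ E_ij ⊗ E_ji`, the Jamiolkowski operator is the conjugate
`(U† ⊗ 1) SWAP (U ⊗ 1)`; moving SWAP to the left swaps the tensor factors, giving
`SWAP (1 ⊗ U†)(U ⊗ 1) = SWAP (U ⊗ U†)`. Part (ii) is the conjugate transpose of this identity,
SWAP and `ρ` being Hermitian.
-/

open Matrix Complex Kronecker

/-- The SWAP operator on `ℂ^d ⊗ ℂ^d`. -/
noncomputable def swapOp (d : ℕ) : Matrix (Fin d × Fin d) (Fin d × Fin d) ℂ :=
  Matrix.of fun p q => if p.1 = q.2 ∧ p.2 = q.1 then 1 else 0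

/-- The Jamiolkowski operator `J = Σ_{i,j} (U† E_{ij} U) ⊗ E_{ji}` of the channel
`Ad_U`. -/
noncomputable def jamiolkowski (d : ℕ) (U : Matrix (Fin d) (Fin d) ℂ) :
    Matrix (Fin d × Fin d) (Fin d × Fin d) ℂ :=
  ∑ i : Fin d, ∑ j : Fin d,
    (Uᴴ * Matrix.single i j (1 : ℂ) * U) ⊗ₖ Matrix.single j i (1 : ℂ)

theorem swapOp_mul_apply {d : ℕ} (M : Matrix (Fin d × Fin d) (Fin d × Fin d) ℂ)
    (p q : Fin d × Fin d) : (swapOp d * M) p q = M p.swap q := by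
  simp [swapOp, mul_apply, Fintype.sum_prod_type, ite_and, Prod.swap]

theorem mul_swapOp_apply {d : ℕ} (M : Matrix (Fin d × Fin d) (Fin d × Fin d) ℂ)
    (p q : Fin d × Fin d) : (M * swapOp d) p q = M p q.swap := by
  simp [swapOp, mul_apply, Fintype.sum_prod_type, ite_and, Prod.swap]

theorem swapOp_mul_kronecker {d : ℕ} (A B : Matrix (Fin d) (Fin d) ℂ) :
    swapOp d * (A ⊗ₖ B) = (B ⊗ₖ A) * swapOp d := by
  ext p q
  simp [swapOp_mul_apply, mul_swapOp_apply, mul_comm]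

theorem conjTranspose_swapOp (d : ℕ) : (swapOp d)ᴴ = swapOp d := by
  ext p q
  simp [swapOp, and_comm, eq_comm]

theorem swapOp_eq_sum_single_kronecker_single (d : ℕ) :
    swapOp d = ∑ i : Fin d, ∑ j : Fin d, single i j (1 : ℂ) ⊗ₖ single j i (1 : ℂ) := by
  ext ⟨a, b⟩ ⟨c, e⟩
  simp only [swapOp, of_apply, single_kronecker_single, mul_one, Matrix.sum_apply, single_apply,
    Prod.mk.injEq, ite_and, Finset.sum_ite_irrel, Finset.sum_ite_eq', Finset.mem_univ,
    if_true, Finset.sum_const_zero]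
  split_ifs <;> rfl

theorem jamiolkowski_eq_conj_swapOp (d : ℕ) (U : Matrix (Fin d) (Fin d) ℂ) :
    jamiolkowski d U = (Uᴴ ⊗ₖ 1) * swapOp d * (U ⊗ₖ 1) := by
  have hterm (i j : Fin d) : (Uᴴ * single i j (1 : ℂ) * U) ⊗ₖ single j i (1 : ℂ) =
      (Uᴴ ⊗ₖ 1) * (single i j 1 ⊗ₖ single j i 1) * (U ⊗ₖ 1) := by
    rw [← mul_kronecker_mul, ← mul_kronecker_mul, Matrix.one_mul, Matrix.mul_one]
  simp only [jamiolkowski, hterm, ← Finset.mul_sum, ← Finset.sum_mul,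
    ← swapOp_eq_sum_single_kronecker_single]

theorem jamiolkowski_eq_swapOp_mul (d : ℕ) (U : Matrix (Fin d) (Fin d) ℂ) :
    jamiolkowski d U = swapOp d * (U ⊗ₖ Uᴴ) := by
  rw [jamiolkowski_eq_conj_swapOp, ← swapOp_mul_kronecker, Matrix.mul_assoc,
    ← mul_kronecker_mul, Matrix.one_mul, Matrix.mul_one]

theorem jamiolkowski_eq_spacetime_state_general (d : ℕ)
    (U : Matrix (Fin d) (Fin d) ℂ)
    (ρ : Matrix (Fin d) (Fin d) ℂ) (hρ : ρ.IsHermitian) :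
    jamiolkowski d U = swapOp d * (U ⊗ₖ Uᴴ) ∧
      jamiolkowski d U * (ρ ⊗ₖ (1 : Matrix (Fin d) (Fin d) ℂ)) =
        ((ρ ⊗ₖ (1 : Matrix (Fin d) (Fin d) ℂ)) * (Uᴴ ⊗ₖ U) * swapOp d)ᴴ := by
  refine ⟨jamiolkowski_eq_swapOp_mul d U, ?_⟩
  rw [jamiolkowski_eq_swapOp_mul, conjTranspose_mul, conjTranspose_mul, conjTranspose_swapOp,
    conjTranspose_kronecker, conjTranspose_kronecker, conjTranspose_conjTranspose,
    conjTranspose_one, hρ.eq, Matrix.mul_assoc]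

/-- (i) `J = SWAP (U ⊗ U†)`; (ii) the timelike-entanglement operator
`T = J (ρ ⊗ 1)` equals the conjugate transpose of the two-time spacetime state
`ρ₀ e^{iS̃} = (ρ ⊗ 1)(U† ⊗ U)·SWAP` of the spacetime formalism. -/
theorem jamiolkowski_eq_spacetime_state (d : ℕ) (hd : 1 ≤ d)
    (U : Matrix (Fin d) (Fin d) ℂ)
    (ρ : Matrix (Fin d) (Fin d) ℂ) (hρ : ρ.IsHermitian) :
    jamiolkowski d U = swapOp d * (U ⊗ₖ Uᴴ) ∧
      jamiolkowski d U * (ρ ⊗ₖ (1 : Matrix (Fin d) (Fin d) ℂ)) =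
        ((ρ ⊗ₖ (1 : Matrix (Fin d) (Fin d) ℂ)) * (Uᴴ ⊗ₖ U) * swapOp d)ᴴ :=
  jamiolkowski_eq_spacetime_state_general d U ρ hρ
end

section
/- For all d × d complex matrices ρ, U, A, B the following two trace identities hold, expressing that the timelike-entanglement operator T_{AB} and its adjoint reproduce the two orderings of two-time (Wightman) correlation functions: (i) Matrix.trace( SWAP * (U ⊗ₖ Uᴴ) * (ρ ⊗ₖ 1) * (A ⊗ₖ B) ) = Matrix.trace( ρ * A * Uᴴ * B * U ); and (ii) Matrix.trace( (ρ ⊗ₖ 1) * (Uᴴ ⊗ₖ U) * SWAP * (A ⊗ₖ B) ) = Matrix.trace( ρ * Uᴴ * B * U * A ). (With U = e^{−iεH} unitary, Uᴴ B U is the Heisenberg-evolved operator B(t), so these are Tr[T_{AB} O_A ⊗ O_B] = tr[ρ O_A O_B(t)] and Tr[T_{AB}† O_A ⊗ O_B] = tr[ρ O_B(t) O_A].) -/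
open Matrix Complex Kronecker

lemma trace_swap_kron (d : ℕ) (M N : Matrix (Fin d) (Fin d) ℂ) :
    Matrix.trace (swapOp d * (M ⊗ₖ N)) = Matrix.trace (M * N) := by
  simp only [Matrix.trace, Matrix.diag, Matrix.mul_apply, swapOp, Matrix.of_apply,
    Matrix.kroneckerMap_apply, Fintype.sum_prod_type, ite_mul, one_mul, zero_mul]
  have key : ∀ i j : Fin d,
      (∑ x2 : Fin d, ∑ x3 : Fin d, if i = x3 ∧ j = x2 then M x2 i * N x3 j else 0)
        = M j i * N i j := by
    intro i j
    rw [Finset.sum_comm]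
    simp [ite_and, Finset.sum_ite_eq, Finset.sum_ite_eq']
  refine (Finset.sum_congr rfl fun i _ => Finset.sum_congr rfl fun j _ => key i j).trans ?_
  rw [Finset.sum_comm]

/-- The timelike-entanglement operator `T_{AB} = SWAP (U ⊗ U†)(ρ ⊗ 1)` and its
adjoint `(ρ ⊗ 1)(U† ⊗ U) SWAP` reproduce the two orderings of two-time (Wightman)
correlation functions: `Tr[T_{AB} A ⊗ B] = tr[ρ A U† B U]` and
`Tr[T_{AB}† A ⊗ B] = tr[ρ U† B U A]`. -/
theorem timelike_operator_wightman (d : ℕ)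
    (ρ U A B : Matrix (Fin d) (Fin d) ℂ) :
    Matrix.trace (swapOp d * (U ⊗ₖ Uᴴ) *
        (ρ ⊗ₖ (1 : Matrix (Fin d) (Fin d) ℂ)) * (A ⊗ₖ B)) =
      Matrix.trace (ρ * A * Uᴴ * B * U) ∧
    Matrix.trace ((ρ ⊗ₖ (1 : Matrix (Fin d) (Fin d) ℂ)) * (Uᴴ ⊗ₖ U) *
        swapOp d * (A ⊗ₖ B)) =
      Matrix.trace (ρ * Uᴴ * B * U * A) := by
  constructor
  · have h1 : swapOp d * (U ⊗ₖ Uᴴ) * (ρ ⊗ₖ (1 : Matrix (Fin d) (Fin d) ℂ)) * (A ⊗ₖ B)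
        = swapOp d * ((U * ρ * A) ⊗ₖ (Uᴴ * 1 * B)) := by
      rw [mul_assoc, mul_assoc, ← Matrix.mul_kronecker_mul, ← Matrix.mul_kronecker_mul,
        ← mul_assoc U ρ A, ← mul_assoc Uᴴ 1 B]
    rw [h1, trace_swap_kron]
    rw [Matrix.mul_one]
    rw [show U * ρ * A * (Uᴴ * B) = U * (ρ * A * Uᴴ * B) by noncomm_ring,
      Matrix.trace_mul_comm]
  · have h2 : (ρ ⊗ₖ (1 : Matrix (Fin d) (Fin d) ℂ)) * (Uᴴ ⊗ₖ U) * swapOp d * (A ⊗ₖ B)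
        = ((ρ * Uᴴ) ⊗ₖ (1 * U)) * (swapOp d * (A ⊗ₖ B)) := by
      rw [← Matrix.mul_kronecker_mul]; noncomm_ring
    rw [h2, Matrix.trace_mul_comm, mul_assoc, ← Matrix.mul_kronecker_mul, trace_swap_kron]
    rw [Matrix.one_mul]
    rw [show A * (ρ * Uᴴ) * (B * U) = A * (ρ * Uᴴ * B * U) by noncomm_ring,
      Matrix.trace_mul_comm]
end

section
/- Let d ≥ 1 and ρ, U : Matrix (Fin d) (Fin d) ℂ be arbitrary. Define X := (ρ ⊗ₖ 1 ⊗ₖ 1 ⊗ₖ 1) * SWAP₀₁ * SWAP₂₃ * SWAP₁₂ * (U ⊗ₖ 1 ⊗ₖ 1 ⊗ₖ Uᴴ), a matrix on the four-fold tensor power of ℂ^d. Then the partial trace of X over the last two tensor slots, the matrix with entries (Tr₂₃ X) ((i₀,i₁),(j₀,j₁)) := Σ_{k,l} X ((i₀,i₁,k,l), (j₀,j₁,k,l)), equals ((ρ * Uᴴ) ⊗ₖ U) * SWAP; entrywise, (Tr₂₃ X) ((i₀,i₁),(j₀,j₁)) = (ρ * Uᴴ) i₀ j₁ · U i₁ j₀.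 (This is the identity Tr_{H₂}[X] = ρ₀ e^{iS̃} exhibiting the consistent-histories operator X as a purification of the two-time spacetime state.) -/
open Matrix Complex Kronecker

/-- The four-fold Kronecker product `A ⊗ B ⊗ C ⊗ D` on `(ℂ^d)^{⊗4}`. -/
noncomputable def kron4 (d : ℕ) (A B C D : Matrix (Fin d) (Fin d) ℂ) :
    Matrix (Fin d × Fin d × Fin d × Fin d) (Fin d × Fin d × Fin d × Fin d) ℂ :=
  Matrix.of fun x y =>
    A x.1 y.1 * B x.2.1 y.2.1 * C x.2.2.1 y.2.2.1 * D x.2.2.2 y.2.2.2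

/-- The permutation matrix exchanging tensor slots 0 and 1. -/
noncomputable def swap01 (d : ℕ) :
    Matrix (Fin d × Fin d × Fin d × Fin d) (Fin d × Fin d × Fin d × Fin d) ℂ :=
  Matrix.of fun x y => if x = (y.2.1, y.1, y.2.2.1, y.2.2.2) then 1 else 0

/-- The permutation matrix exchanging tensor slots 2 and 3. -/
noncomputable def swap23 (d : ℕ) :
    Matrix (Fin d × Fin d × Fin d × Fin d) (Fin d × Fin d × Fin d × Fin d) ℂ :=
  Matrix.of fun x y => if x = (y.1, y.2.1, y.2.2.2, y.2.2.1) then 1 else 0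

/-- The permutation matrix exchanging tensor slots 1 and 2. -/
noncomputable def swap12 (d : ℕ) :
    Matrix (Fin d × Fin d × Fin d × Fin d) (Fin d × Fin d × Fin d × Fin d) ℂ :=
  Matrix.of fun x y => if x = (y.1, y.2.2.1, y.2.1, y.2.2.2) then 1 else 0

/-- The consistent-histories operator
`X = (ρ ⊗ 1 ⊗ 1 ⊗ 1)·SWAP₀₁·SWAP₂₃·SWAP₁₂·(U ⊗ 1 ⊗ 1 ⊗ U†)`. -/
noncomputable def Xop (d : ℕ) (ρ U : Matrix (Fin d) (Fin d) ℂ) :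
    Matrix (Fin d × Fin d × Fin d × Fin d) (Fin d × Fin d × Fin d × Fin d) ℂ :=
  kron4 d ρ 1 1 1 * swap01 d * swap23 d * swap12 d * kron4 d U 1 1 Uᴴ

/-- The partial trace of a four-slot operator over the last two tensor slots. -/
noncomputable def ptrace23 (d : ℕ)
    (X : Matrix (Fin d × Fin d × Fin d × Fin d)
      (Fin d × Fin d × Fin d × Fin d) ℂ) :
    Matrix (Fin d × Fin d) (Fin d × Fin d) ℂ :=
  Matrix.of fun p q => ∑ k : Fin d, ∑ l : Fin d,
    X (p.1, p.2, k, l) (q.1, q.2, k, l)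


lemma mul_swap01 (d : ℕ) (M : Matrix (Fin d × Fin d × Fin d × Fin d) (Fin d × Fin d × Fin d × Fin d) ℂ)
    (x y : Fin d × Fin d × Fin d × Fin d) :
    (M * swap01 d) x y = M x (y.2.1, y.1, y.2.2.1, y.2.2.2) := by
  simp [mul_apply, swap01, mul_ite, Finset.sum_ite_eq']

lemma mul_swap23 (d : ℕ) (M : Matrix (Fin d × Fin d × Fin d × Fin d) (Fin d × Fin d × Fin d × Fin d) ℂ)
    (x y : Fin d × Fin d × Fin d × Fin d) :
    (M * swap23 d) x y = M x (y.1, y.2.1, y.2.2.2, y.2.2.1) := by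
  simp [mul_apply, swap23, mul_ite, Finset.sum_ite_eq']

lemma mul_swap12 (d : ℕ) (M : Matrix (Fin d × Fin d × Fin d × Fin d) (Fin d × Fin d × Fin d × Fin d) ℂ)
    (x y : Fin d × Fin d × Fin d × Fin d) :
    (M * swap12 d) x y = M x (y.1, y.2.2.1, y.2.1, y.2.2.2) := by
  simp [mul_apply, swap12, mul_ite, Finset.sum_ite_eq']

lemma Xop_apply (d : ℕ) (ρ U : Matrix (Fin d) (Fin d) ℂ)
    (x y : Fin d × Fin d × Fin d × Fin d) :
    Xop d ρ U x y =
      ρ x.1 y.2.2.1 * U x.2.1 y.1 * Uᴴ x.2.2.1 y.2.2.2 *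
        (if x.2.2.2 = y.2.1 then 1 else 0) := by
  rw [Xop, mul_apply]
  have hP : ∀ z : Fin d × Fin d × Fin d × Fin d,
      (kron4 d ρ 1 1 1 * swap01 d * swap23 d * swap12 d) x z =
        ρ x.1 z.2.2.1 * (if x.2.1 = z.1 then 1 else 0) *
          (if x.2.2.1 = z.2.2.2 then 1 else 0) *
          (if x.2.2.2 = z.2.1 then 1 else 0) := by
    intro z
    rw [mul_swap12, mul_swap23, mul_swap01]
    simp [kron4, Matrix.one_apply]
  simp only [hP]
  simp only [kron4, of_apply, Matrix.one_apply]
  simp only [Fintype.sum_prod_type]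
  simp only [mul_ite, ite_mul, mul_one, mul_zero, one_mul, zero_mul]
  rw [Fintype.sum_eq_single x.2.1 (fun b hb => by simp [Ne.symm hb])]
  rw [Fintype.sum_eq_single x.2.2.2 (fun b hb => by simp [Ne.symm hb])]
  rw [Fintype.sum_eq_single y.2.2.1 (fun b hb => by simp [hb])]
  rw [Fintype.sum_eq_single x.2.2.1 (fun b hb => by simp [Ne.symm hb])]
  split_ifs <;> simp_all <;> ring

/-- `Tr_{H₂}[X] = ρ₀ e^{iS̃}`: the partial trace of the consistent-histories
operator `X` over the last two slots equals the two-time spacetime state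
`((ρ U†) ⊗ U)·SWAP`; entrywise,
`(Tr₂₃ X)((i₀,i₁),(j₀,j₁)) = (ρU†)_{i₀ j₁} · U_{i₁ j₀}`. -/
theorem ptrace_consistent_histories (d : ℕ) (hd : 1 ≤ d)
    (ρ U : Matrix (Fin d) (Fin d) ℂ) :
    ptrace23 d (Xop d ρ U) = ((ρ * Uᴴ) ⊗ₖ U) * swapOp d ∧
      ∀ i₀ i₁ j₀ j₁ : Fin d,
        ptrace23 d (Xop d ρ U) (i₀, i₁) (j₀, j₁) =
          (ρ * Uᴴ) i₀ j₁ * U i₁ j₀ := by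
  have key : ∀ i₀ i₁ j₀ j₁ : Fin d,
      ptrace23 d (Xop d ρ U) (i₀, i₁) (j₀, j₁) =
        (ρ * Uᴴ) i₀ j₁ * U i₁ j₀ := by
    intro i₀ i₁ j₀ j₁
    simp only [ptrace23, of_apply, Xop_apply]
    simp [mul_ite, ite_mul, mul_zero, zero_mul, mul_one, Finset.sum_ite_eq',
      mul_apply, Finset.sum_mul, Finset.mul_sum]
    ring_nf
    congr 1
    ext k
    ring
  refine ⟨?_, key⟩
  ext ⟨i₀, i₁⟩ ⟨j₀, j₁⟩
  rw [key]
  simp [mul_apply, kroneckerMap_apply, swapOp, Fintype.sum_prod_type, ite_and,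
    mul_ite, ite_mul, mul_zero, zero_mul, mul_one, Finset.sum_ite_eq, Finset.sum_ite_eq']
end

section
/- Let d ≥ 1, U : Matrix (Fin d) (Fin d) ℂ unitary, ρ, β₀, β₁ : Matrix (Fin d) (Fin d) ℂ arbitrary, and α₀, α₁ : Matrix (Fin d) (Fin d) ℂ Hermitian. With X := (ρ ⊗ₖ 1 ⊗ₖ 1 ⊗ₖ 1) * SWAP₀₁ * SWAP₂₃ * SWAP₁₂ * (U ⊗ₖ 1 ⊗ₖ 1 ⊗ₖ Uᴴ), the trace against a product operator reproduces the two-time decoherence functional d(α, β) = tr[C_α† ρ C_β] with class operators C_α = α₀ · Uᴴ α₁ U: Matrix.trace( X * (α₀ ⊗ₖ α₁ ⊗ₖ β₀ ⊗ₖ β₁) ) = Matrix.trace( (α₀ * Uᴴ * α₁ * U)ᴴ * ρ * (β₀ * Uᴴ * β₁ * U) ). -/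
open Matrix Complex Kronecker

section Aux
variable {d : ℕ}

lemma sum4_reindex (F : Fin d × Fin d × Fin d × Fin d → ℂ)
    (σ : Fin d × Fin d × Fin d × Fin d → Fin d × Fin d × Fin d × Fin d)
    (hσ : ∀ p, σ (σ p) = p) :
    ∑ p, F p = ∑ p, F (σ p) :=
  Fintype.sum_equiv ⟨σ, σ, hσ, hσ⟩ _ _ (fun _ => rfl) |>.symm

lemma nest4 (F : Fin d × Fin d × Fin d × Fin d → ℂ) :
    ∑ p, F p = ∑ i, ∑ j, ∑ k, ∑ l, F (i,j,k,l) := by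
  rw [Fintype.sum_prod_type]
  simp [Fintype.sum_prod_type]

lemma mul4_sum (f g h m : Fin d → ℂ) :
    (∑ i, f i) * (∑ j, g j) * (∑ k, h k) * (∑ l, m l)
      = ∑ i, ∑ j, ∑ k, ∑ l, f i * g j * h k * m l := by
  rw [mul_assoc, mul_assoc, Finset.sum_mul_sum, Finset.sum_mul_sum, Finset.sum_mul_sum]
  simp only [Finset.mul_sum]
  exact Finset.sum_congr rfl fun i _ => Finset.sum_congr rfl fun j _ =>
    Finset.sum_congr rfl fun k _ => Finset.sum_congr rfl fun l _ => by ring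

lemma kron4_mul (A B C D A' B' C' D' : Matrix (Fin d) (Fin d) ℂ) :
    kron4 d A B C D * kron4 d A' B' C' D' =
      kron4 d (A*A') (B*B') (C*C') (D*D') := by
  ext x y
  rw [Matrix.mul_apply]
  rw [nest4 (fun p => (kron4 d A B C D x p) * (kron4 d A' B' C' D' p y))]
  simp only [kron4, Matrix.of_apply, Matrix.mul_apply]
  rw [mul4_sum]
  exact Finset.sum_congr rfl fun i _ => Finset.sum_congr rfl fun j _ =>
    Finset.sum_congr rfl fun k _ => Finset.sum_congr rfl fun l _ => by ring

lemma trace_perm (M N P Q : Matrix (Fin d) (Fin d) ℂ) :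
    Matrix.trace (swap01 d * swap23 d * swap12 d * kron4 d M N P Q)
      = Matrix.trace (M * P * Q * N) := by
  simp only [Matrix.trace, Matrix.diag, Matrix.mul_apply, swap01, swap23, swap12, kron4,
    Matrix.of_apply, ite_mul, mul_ite, mul_zero, zero_mul, one_mul,
    Finset.sum_ite_eq', Finset.sum_ite_eq, Finset.mem_univ, if_true]
  rw [Finset.sum_comm]
  simp only [Finset.sum_ite_eq', Finset.mem_univ, if_true]
  rw [sum4_reindex _ (fun p => (p.1, p.2.1, p.2.2.2, p.2.2.1)) (fun p => rfl)]
  rw [nest4]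
  simp only [Finset.sum_mul]
  exact Finset.sum_congr rfl fun i _ => Finset.sum_congr rfl fun j _ =>
    Finset.sum_congr rfl fun k _ => Finset.sum_congr rfl fun l _ => by ring

end Aux

/-- The trace of `X` against a product operator reproduces the two-time
decoherence functional `d(α, β) = tr[C_α† ρ C_β]` with class operators
`C_α = α₀ · U† α₁ U`:
`Tr(X (α₀ ⊗ α₁ ⊗ β₀ ⊗ β₁)) = tr((α₀ U† α₁ U)† ρ (β₀ U† β₁ U))`. -/
theorem consistent_histories_decoherence_functional (d : ℕ) (hd : 1 ≤ d)
    (U : Matrix (Fin d) (Fin d) ℂ)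
    (hU : U * Uᴴ = 1 ∧ Uᴴ * U = 1)
    (ρ β₀ β₁ : Matrix (Fin d) (Fin d) ℂ)
    (α₀ α₁ : Matrix (Fin d) (Fin d) ℂ)
    (hα₀ : α₀.IsHermitian) (hα₁ : α₁.IsHermitian) :
    Matrix.trace (Xop d ρ U * kron4 d α₀ α₁ β₀ β₁) =
      Matrix.trace ((α₀ * Uᴴ * α₁ * U)ᴴ * ρ * (β₀ * Uᴴ * β₁ * U)) := by
  obtain ⟨hU1, hU2⟩ := hU
  have cancel : ∀ Z : Matrix (Fin d) (Fin d) ℂ, U * (Uᴴ * Z) = Z := fun Z => by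
    rw [← mul_assoc, hU1, one_mul]
  have step1 : Xop d ρ U * kron4 d α₀ α₁ β₀ β₁
      = kron4 d ρ 1 1 1 *
        (swap01 d * (swap23 d * (swap12 d * kron4 d (U*α₀) (1*α₁) (1*β₀) (Uᴴ*β₁)))) := by
    simp only [Xop, mul_assoc, kron4_mul]
  rw [step1, Matrix.trace_mul_comm]
  have step2 : swap01 d * (swap23 d * (swap12 d * kron4 d (U*α₀) (1*α₁) (1*β₀) (Uᴴ*β₁))) *
        kron4 d ρ 1 1 1
      = swap01 d * swap23 d * swap12 d * kron4 d (U*α₀*ρ) (1*α₁*1) (1*β₀*1) (Uᴴ*β₁*1) := by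
    simp only [mul_assoc, kron4_mul]
  rw [step2, trace_perm]
  simp only [one_mul, mul_one]
  rw [Matrix.trace_mul_comm]
  conv_rhs => rw [Matrix.trace_mul_comm]
  simp only [conjTranspose_mul, conjTranspose_conjTranspose, hα₀.eq, hα₁.eq, mul_assoc, cancel]
  conv_rhs => rw [Matrix.trace_mul_comm]
  simp only [mul_assoc]
  conv_rhs => rw [Matrix.trace_mul_comm]
  simp only [mul_assoc]
  conv_rhs => rw [Matrix.trace_mul_comm]
  simp only [mul_assoc]
end
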